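/- arXiv:2604.02712 — 9 statements merged into one kernel-verified Lean document; each statement's English description precedes it below -/
import Mathlib

section
/- Let F' ⊆ F be a subset of the features containing the fixed feature f0, and let φ'_μ be the weighted counting function of the restricted instance whose profiles and quota-compliant set Z̄' use only the feature-value pairs with feature in F'. Then for all i ∈ {1,…,n+1}, all z ∈ ℕ^{FV}, all strictly positive weights μ ∈ ℝ^N_{>0}, and all F' ⊆ F, we have φ_μ(i, z) ≤ φ'_μ(i, z|_{F'}), where z|_{F'} denotes the restriction of z to the coordinates with feature in F'. -/
open scoped Classical

/-- The weighted counting function `φ_μ`: `wCountFn n w μ Zbar i z` is the sum, over all subsets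
`U` of the suffix `{i, …, n-1}` of the pool (0-indexed) such that `z + w(U)` is quota-compliant,
of the weight products `∏_{t ∈ U} μ t`. -/
noncomputable def wCountFn {FV : Type*} (n : ℕ) (w : Fin n → FV → ℕ) (μ : Fin n → ℝ)
    (Zbar : Set (FV → ℕ)) (i : ℕ) (z : FV → ℕ) : ℝ :=
  ∑ U ∈ Finset.univ.filter (fun U : Finset (Fin n) =>
      (∀ t ∈ U, i ≤ (t : ℕ)) ∧ (z + ∑ t ∈ U, w t) ∈ Zbar),
    ∏ t ∈ U, μ t

/-- For a subset `F'` of the features containing the fixed feature `f0`, the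
weighted counting function of the restricted instance upper-bounds the weighted counting
function of the full instance: `φ_μ(i, z) ≤ φ'_μ(i, z|_{F'})` for all `i`, `z` and all strictly
positive weights `μ`. -/
theorem restricted_count_upper_bound
    (n : ℕ) {F : Type*} [Fintype F] {V : F → Type*} [∀ f, Fintype (V f)]
    (feat : Fin n → ∀ f : F, V f) (k : ℕ)
    (ℓ u : ((f : F) × V f) → ℕ) (f0 : F)
    (hℓu : ∀ fv, ℓ fv ≤ u fv) (huk : ∀ fv, u fv ≤ k)
    (w : Fin n → ((f : F) × V f) → ℕ)
    (hw : ∀ i f v, w i ⟨f, v⟩ = if feat i f = v then 1 else 0)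
    (Zbar : Set (((f : F) × V f) → ℕ))
    (hZ : Zbar = {z | (∀ fv, ℓ fv ≤ z fv ∧ z fv ≤ u fv) ∧ ∑ v : V f0, z ⟨f0, v⟩ = k})
    (F' : Set F) (hf0 : f0 ∈ F')
    (Zbar' : Set ({fv : (f : F) × V f // fv.1 ∈ F'} → ℕ))
    (hZ' : Zbar' = {z | (∀ fv, ℓ fv.1 ≤ z fv ∧ z fv ≤ u fv.1) ∧
        ∑ v : V f0, z ⟨⟨f0, v⟩, hf0⟩ = k})
    (μ : Fin n → ℝ) (hμ : ∀ t, 0 < μ t)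
    (i : ℕ) (hi : i ≤ n) (z : ((f : F) × V f) → ℕ) :
    wCountFn n w μ Zbar i z ≤
      wCountFn n (fun t fv => w t fv.1) μ Zbar' i (fun fv => z fv.1) := by
  unfold wCountFn
  apply Finset.sum_le_sum_of_subset_of_nonneg
  · intro U hU
    simp only [Finset.mem_filter, Finset.mem_univ, true_and] at hU ⊢
    obtain ⟨h1, h2⟩ := hU
    refine ⟨h1, ?_⟩
    rw [hZ] at h2
    rw [hZ']
    obtain ⟨hb, hs⟩ := h2
    constructor
    · intro fv
      have := hb fv.1
      simpa using this
    · simpa using hs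
  · intro U _ _
    exact Finset.prod_nonneg fun t _ => (hμ t).le
end

section
/- Let ω_1,…,ω_m be the distinct feature-value vectors occurring in the pool, let N|_{ω_j} be the set of pool members with vector ω_j, let n_j = |N|_{ω_j}|, and for 0 ≤ d ≤ n_j define C_μ(j, d) = Σ_{S ⊆ N|_{ω_j}, |S| = d} ∏_{i∈S} μ_i. Let N_j = N|_{ω_j} ∪ … ∪ N|_{ω_m} and define φ_μ(j, z) = Σ_{U ⊆ N_j : z + w(U) ∈ Z̄} ∏_{t∈U} μ_t. Then for every j ∈ {1,…,m} and z ∈ ℕ^{FV}, φ_μ(j, z) = Σ_{d=0}^{n_j} C_μ(j, d) · φ_μ(j+1, z + d·ω_j), with base case φ_μ(m+1, z) = 1 if z ∈ Z̄ and 0 otherwise. -/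
open scoped Classical

/-- The layered weighted counting function `φ_μ(j, z)`: the sum, over all subsets `U` of
`N_j = N|_{ω_j} ∪ … ∪ N|_{ω_{m-1}}` (pool members whose feature-value class index is at least
`j`, classes 0-indexed) with `z + w(U)` quota-compliant, of the weight products `∏_{t∈U} μ t`. -/
noncomputable def layerCount {FV : Type*} (n m : ℕ) (cls : Fin n → Fin m)
    (μ : Fin n → ℝ) (w : Fin n → FV → ℕ) (Zbar : Set (FV → ℕ))
    (j : ℕ) (z : FV → ℕ) : ℝ :=
  ∑ U ∈ Finset.univ.filter (fun U : Finset (Fin n) =>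
      (∀ t ∈ U, j ≤ ((cls t : ℕ))) ∧ (z + ∑ t ∈ U, w t) ∈ Zbar),
    ∏ t ∈ U, μ t

/-- `C_μ(j, d)`: the weighted number of `d`-element subsets of the class
`N|_{ω_j}` of pool members with feature-value vector `ω_j`. -/
noncomputable def classCoeff (n m : ℕ) (cls : Fin n → Fin m) (μ : Fin n → ℝ)
    (j : Fin m) (d : ℕ) : ℝ :=
  ∑ S ∈ Finset.univ.filter (fun S : Finset (Fin n) =>
      (∀ t ∈ S, cls t = j) ∧ S.card = d),
    ∏ t ∈ S, μ t

/-- The layered weighted dynamic program: for every class index `j` and profile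
`z`, `φ_μ(j, z) = ∑_{d=0}^{n_j} C_μ(j, d) · φ_μ(j+1, z + d·ω_j)`, with base case
`φ_μ(m, z) = 1` if `z ∈ Z̄` and `0` otherwise (classes indexed `0, …, m-1`). -/
theorem layered_weighted_dp
    (n m : ℕ) {F : Type*} [Fintype F] {V : F → Type*} [∀ f, Fintype (V f)]
    (feat : Fin n → ∀ f : F, V f) (k : ℕ)
    (ℓ u : ((f : F) × V f) → ℕ) (f0 : F)
    (hℓu : ∀ fv, ℓ fv ≤ u fv) (huk : ∀ fv, u fv ≤ k)
    (w : Fin n → ((f : F) × V f) → ℕ)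
    (hw : ∀ i f v, w i ⟨f, v⟩ = if feat i f = v then 1 else 0)
    (Zbar : Set (((f : F) × V f) → ℕ))
    (hZ : Zbar = {z | (∀ fv, ℓ fv ≤ z fv ∧ z fv ≤ u fv) ∧ ∑ v : V f0, z ⟨f0, v⟩ = k})
    (ω : Fin m → ((f : F) × V f) → ℕ) (hω : Function.Injective ω)
    (cls : Fin n → Fin m) (hwcls : ∀ i, w i = ω (cls i))
    (μ : Fin n → ℝ) (hμ : ∀ i, 0 < μ i) :
    (∀ z, layerCount n m cls μ w Zbar m z = if z ∈ Zbar then 1 else 0) ∧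
    (∀ (j : Fin m) (z : ((f : F) × V f) → ℕ),
      layerCount n m cls μ w Zbar j z =
        ∑ d ∈ Finset.range ((Finset.univ.filter fun i => cls i = j).card + 1),
          classCoeff n m cls μ j d *
            layerCount n m cls μ w Zbar ((j : ℕ) + 1) (z + d • ω j)) := by
  classical
  have hwsum : ∀ (S : Finset (Fin n)) (j : Fin m), (∀ t ∈ S, cls t = j) →
      ∑ t ∈ S, w t = S.card • ω j := by
    intro S j hS
    rw [← Finset.sum_const]
    exact Finset.sum_congr rfl fun t ht => by rw [hwcls, hS t ht]
  constructor
  · -- base case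
    intro z
    unfold layerCount
    have hfilter : Finset.univ.filter (fun U : Finset (Fin n) =>
        (∀ t ∈ U, (m : ℕ) ≤ ((cls t : ℕ))) ∧ (z + ∑ t ∈ U, w t) ∈ Zbar)
        = if z ∈ Zbar then {∅} else ∅ := by
      ext U
      simp only [Finset.mem_filter, Finset.mem_univ, true_and]
      have hemp : (∀ t ∈ U, (m : ℕ) ≤ ((cls t : ℕ))) → U = ∅ := by
        intro h1
        by_contra hne
        obtain ⟨t, ht⟩ := Finset.nonempty_iff_ne_empty.2 hne
        exact absurd (h1 t ht) (not_le.2 (cls t).isLt)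
      split
      · next hz =>
        simp only [Finset.mem_singleton]
        constructor
        · rintro ⟨h1, _⟩; exact hemp h1
        · rintro rfl
          refine ⟨by simp, ?_⟩
          simpa using hz
      · next hz =>
        simp only [Finset.notMem_empty, iff_false]
        rintro ⟨h1, h2⟩
        rw [hemp h1] at h2
        simp only [Finset.sum_empty, add_zero] at h2
        exact hz h2
    rw [hfilter]
    split <;> simp
  · -- recursive case
    intro j z
    set nj := (Finset.univ.filter fun i => cls i = j).card with hnjdef
    have hnj : ∀ S : Finset (Fin n), (∀ t ∈ S, cls t = j) → S.card ≤ nj := fun S hS =>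
      Finset.card_le_card (fun t ht => Finset.mem_filter.2 ⟨Finset.mem_univ t, hS t ht⟩)
    -- RHS rewritten as a single sum over subsets of the class of j
    have hR : ∑ d ∈ Finset.range (nj + 1),
          classCoeff n m cls μ j d * layerCount n m cls μ w Zbar ((j : ℕ) + 1) (z + d • ω j)
        = ∑ S ∈ Finset.univ.filter (fun S : Finset (Fin n) => ∀ t ∈ S, cls t = j),
            (∏ t ∈ S, μ t) *
              layerCount n m cls μ w Zbar ((j : ℕ) + 1) (z + S.card • ω j) := by
      rw [← Finset.sum_fiberwise_of_maps_to (g := Finset.card)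
        (t := Finset.range (nj + 1))
        (fun S hS => Finset.mem_range.2 (Nat.lt_succ_of_le
          (hnj S (Finset.mem_filter.1 hS).2)))]
      refine Finset.sum_congr rfl fun d _ => ?_
      rw [classCoeff, Finset.sum_mul, Finset.filter_filter]
      refine Finset.sum_congr rfl fun S hS => ?_
      have hcard : S.card = d := (Finset.mem_filter.1 hS).2.2
      rw [hcard]
    rw [hR]
    -- now expand LHS via the bijection U ↦ (U ∩ class j, U \ class j)
    unfold layerCount
    rw [Finset.sum_congr rfl (fun S _ => Finset.mul_sum ..), Finset.sum_sigma']
    refine Finset.sum_nbij'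
      (fun U => ⟨U.filter (fun t => cls t = j), U.filter (fun t => ¬ cls t = j)⟩)
      (fun p => p.1 ∪ p.2) ?_ ?_ ?_ ?_ ?_
    · -- maps to
      intro U hU
      obtain ⟨hU1, hU2⟩ := (Finset.mem_filter.1 hU)
      obtain ⟨hU1, hU2⟩ := hU2
      simp only [Finset.mem_sigma, Finset.mem_filter, Finset.mem_univ, true_and]
      refine ⟨fun t ht => ht.2, fun t ht => ?_, ?_⟩
      · obtain ⟨htU, htne⟩ := ht
        have h1 := hU1 t htU
        have h2 : (j : ℕ) ≠ ((cls t : ℕ)) := fun h => htne (Fin.val_injective h.symm)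
        omega
      · have hsplit : ∑ t ∈ U, w t =
            (U.filter (fun t => cls t = j)).card • ω j +
              ∑ t ∈ U.filter (fun t => ¬ cls t = j), w t := by
          rw [← hwsum _ j (fun t ht => (Finset.mem_filter.1 ht).2),
            Finset.sum_filter_add_sum_filter_not]
        rw [add_assoc, ← hsplit]
        exact hU2
    · -- inverse maps to
      intro p hp
      simp only [Finset.mem_sigma, Finset.mem_filter, Finset.mem_univ, true_and] at hp
      obtain ⟨h1, h2, h3⟩ := hp
      have hdisj : Disjoint p.1 p.2 := by
        rw [Finset.disjoint_left]
        intro t ht1 ht2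
        have := h2 t ht2
        rw [h1 t ht1] at this
        omega
      refine Finset.mem_filter.2 ⟨Finset.mem_univ _, fun t ht => ?_, ?_⟩
      · rcases Finset.mem_union.1 ht with ht | ht
        · exact le_of_eq (congrArg Fin.val (h1 t ht)).symm
        · exact le_of_lt (Nat.lt_of_succ_le (h2 t ht))
      · rw [Finset.sum_union hdisj, hwsum p.1 j h1, ← add_assoc]
        exact h3
    · -- left inverse
      intro U hU
      exact Finset.filter_union_filter_not_eq _ U
    · -- right inverse
      intro p hp
      simp only [Finset.mem_sigma, Finset.mem_filter, Finset.mem_univ, true_and] at hp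
      obtain ⟨h1, h2, h3⟩ := hp
      have hc1 : ∀ t ∈ p.1, cls t = j := h1
      have hc2 : ∀ t ∈ p.2, ¬ cls t = j := fun t ht heq => by
        have := h2 t ht; rw [heq] at this; omega
      have e1 : (p.1 ∪ p.2).filter (fun t => cls t = j) = p.1 := by
        rw [Finset.filter_union, Finset.filter_eq_self.2 hc1,
          Finset.filter_false_of_mem hc2, Finset.union_empty]
      have e2 : (p.1 ∪ p.2).filter (fun t => ¬ cls t = j) = p.2 := by
        rw [Finset.filter_union, Finset.filter_false_of_mem (fun t ht => not_not.2 (hc1 t ht)),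
          Finset.filter_eq_self.2 hc2, Finset.empty_union]
      cases p with
      | mk S T => simp only [e1, e2]
    · -- values agree
      intro U hU
      obtain ⟨_, h1, _⟩ := Finset.mem_filter.1 hU
      exact (Finset.prod_filter_mul_prod_filter_not U (fun t => cls t = j) μ).symm
end

section
/- Fix strictly positive weights μ ∈ ℝ^N_{>0}, let ω_1,…,ω_m be the distinct feature-value vectors in the pool with classes N|_{ω_j} of sizes n_j, and let φ_μ and C_μ be as in the layered weighted dynamic program. Define transition probabilities p_{j,z}(d) = C_μ(j,d)·φ_μ(j+1, z + d·ω_j)/φ_μ(j,z) and within-class subset probabilities q_{j,d}(S) = (∏_{i∈S} μ_i)/C_μ(j,d) for S ⊆ N|_{ω_j} with |S| = d. Then for every set P ⊆ N with w(P) ∈ Z̄, setting S_j = P ∩ N|_{ω_j}, d_j = |S_j|, z_1 = 0 and z_{j+1} = z_j + d_j·ω_j, the telescoping identity ∏_{j=1}^m p_{j,z_j}(d_j) · ∏_{j=1}^m q_{j,d_j}(S_j) = (∏_{i∈P} μ_i) / φ_μ(1, 0) holds; consequently the sequential sampling algorithm outputs each such P with probability proportional to ∏_{i∈P} μ_i.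 -/
open scoped Classical

/-!
Along the trajectory, `z_j` is the profile of the members of `P` in the layers below `j`, so the
members of `P` in the remaining layers witness `φ_μ(j, z_j) > 0`, and `φ_μ(m, z_m) = 1` because
only `U = ∅` is left after the last layer and `z_m = w(P) ∈ Z̄`. The weights `C_μ(j, d_j)` then
cancel, the sets `S_j` reassemble `∏_{i ∈ P} μ_i`, and the ratios of `φ_μ` telescope.
-/

open Finset

theorem prod_range_div_of_ne_zero {G : Type*} [CommGroupWithZero G] (g : ℕ → G) (m : ℕ)
    (hg : ∀ j ≤ m, g j ≠ 0) : ∏ j ∈ range m, g (j + 1) / g j = g m / g 0 := by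
  induction m with
  | zero => simp [div_self (hg 0 le_rfl)]
  | succ m ih =>
    rw [prod_range_succ, ih fun j hj => hg j (hj.trans m.le_succ), mul_comm,
      div_mul_div_cancel₀ (hg m m.le_succ)]

section LayeredCounting

variable {FV : Type*} {n m : ℕ} {cls : Fin n → Fin m} {μ : Fin n → ℝ} {w : Fin n → FV → ℕ}
  {Zbar : Set (FV → ℕ)}

theorem layerCount_pos (hμ : ∀ i, 0 < μ i) {j : ℕ} {z : FV → ℕ} (U : Finset (Fin n))
    (hU : ∀ t ∈ U, j ≤ (cls t : ℕ)) (hz : z + ∑ t ∈ U, w t ∈ Zbar) :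
    0 < layerCount n m cls μ w Zbar j z :=
  sum_pos (fun _ _ => prod_pos fun i _ => hμ i) ⟨U, by simpa using ⟨hU, hz⟩⟩

theorem layerCount_prefix_pos (hμ : ∀ i, 0 < μ i) {P : Finset (Fin n)}
    (hP : ∑ i ∈ P, w i ∈ Zbar) (j : ℕ) :
    0 < layerCount n m cls μ w Zbar j (∑ i ∈ P with (cls i : ℕ) < j, w i) := by
  refine layerCount_pos hμ (P.filter fun i => j ≤ (cls i : ℕ)) (by simp) ?_
  have hsplit := sum_filter_add_sum_filter_not P (fun i => (cls i : ℕ) < j) w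
  simp only [not_lt] at hsplit
  rwa [hsplit]

theorem layerCount_top_of_mem {z : FV → ℕ} (hz : z ∈ Zbar) :
    layerCount n m cls μ w Zbar m z = 1 := by
  rw [layerCount, sum_eq_single_of_mem ∅ (by simpa using hz), prod_empty]
  intro U hU hne
  obtain ⟨t, ht⟩ := nonempty_iff_ne_empty.mpr hne
  exact absurd ((mem_filter.mp hU).2.1 t ht) (cls t).isLt.not_ge

theorem classCoeff_pos (hμ : ∀ i, 0 < μ i) {j : Fin m} (S : Finset (Fin n))
    (hS : ∀ t ∈ S, cls t = j) : 0 < classCoeff n m cls μ j S.card :=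
  sum_pos (fun _ _ => prod_pos fun i _ => hμ i) ⟨S, by simpa using hS⟩

theorem sum_filter_cls_lt_succ (P : Finset (Fin n)) {j : ℕ} (hj : j < m) :
    ∑ i ∈ P with (cls i : ℕ) < j + 1, w i =
      ∑ i ∈ P with (cls i : ℕ) < j, w i + ∑ i ∈ P with cls i = ⟨j, hj⟩, w i := by
  rw [← sum_union (disjoint_filter.2 fun i _ hlt heq => by simp [heq] at hlt), ← filter_or]
  exact sum_congr (filter_congr fun i _ => by simp [Fin.ext_iff]; omega) fun _ _ => rfl

theorem sum_filter_cls_eq {ω : Fin m → FV → ℕ} (hwcls : ∀ i, w i = ω (cls i))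
    (P : Finset (Fin n)) (j : Fin m) :
    ∑ i ∈ P with cls i = j, w i = #(P.filter fun i => cls i = j) • ω j := by
  rw [sum_congr rfl fun i hi => by rw [hwcls, (mem_filter.mp hi).2], sum_const]

theorem trajectory_eq_sum_filter_cls_lt {ω : Fin m → FV → ℕ} (hwcls : ∀ i, w i = ω (cls i))
    (P : Finset (Fin n)) {traj : ℕ → FV → ℕ} (h0 : traj 0 = 0)
    (hsucc : ∀ j : Fin m, traj (j + 1) = traj j + #(P.filter fun i => cls i = j) • ω j) :
    ∀ j ≤ m, traj j = ∑ i ∈ P with (cls i : ℕ) < j, w i := by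
  intro j hj
  induction j with
  | zero => simp [h0]
  | succ j ih =>
    rw [sum_filter_cls_lt_succ P hj, sum_filter_cls_eq hwcls, ← ih (j.le_succ.trans hj)]
    exact hsucc ⟨j, hj⟩

end LayeredCounting

theorem sequential_sampling_telescoping_general
    (n m : ℕ) {F : Type*} {V : F → Type*}
    (w : Fin n → ((f : F) × V f) → ℕ)
    (Zbar : Set (((f : F) × V f) → ℕ))
    (ω : Fin m → ((f : F) × V f) → ℕ)
    (cls : Fin n → Fin m) (hwcls : ∀ i, w i = ω (cls i))
    (μ : Fin n → ℝ) (hμ : ∀ i, 0 < μ i)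
    (P : Finset (Fin n)) (hP : (∑ i ∈ P, w i) ∈ Zbar)
    (d : Fin m → ℕ) (hd : ∀ j, d j = (P.filter fun i => cls i = j).card)
    (traj : ℕ → ((f : F) × V f) → ℕ)
    (htraj0 : traj 0 = 0)
    (htrajS : ∀ j : Fin m, traj ((j : ℕ) + 1) = traj (j : ℕ) + d j • ω j) :
    (∏ j : Fin m,
        classCoeff n m cls μ j (d j) *
            layerCount n m cls μ w Zbar ((j : ℕ) + 1) (traj ((j : ℕ) + 1)) /
          layerCount n m cls μ w Zbar (j : ℕ) (traj (j : ℕ))) *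
      (∏ j : Fin m,
        (∏ i ∈ P.filter fun i => cls i = j, μ i) / classCoeff n m cls μ j (d j)) =
      (∏ i ∈ P, μ i) / layerCount n m cls μ w Zbar 0 0 := by
  set g : ℕ → ℝ := fun j => layerCount n m cls μ w Zbar j (traj j) with hg
  have htraj := trajectory_eq_sum_filter_cls_lt hwcls P htraj0 fun j => hd j ▸ htrajS j
  have hg_ne : ∀ j ≤ m, g j ≠ 0 := fun j hj => by
    simpa only [hg, htraj j hj] using (layerCount_prefix_pos hμ hP j).ne'
  have hg_top : g m = 1 := by
    simpa only [hg, htraj m le_rfl, filter_true_of_mem fun i _ => (cls i).isLt] using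
      layerCount_top_of_mem hP
  have hC : ∀ j, classCoeff n m cls μ j (d j) ≠ 0 := fun j =>
    hd j ▸ (classCoeff_pos hμ _ fun t ht => (mem_filter.mp ht).2).ne'
  calc _ = ∏ j : Fin m, g (j + 1) / g j * ∏ i ∈ P with cls i = j, μ i := by
        rw [← prod_mul_distrib]
        refine prod_congr rfl fun j _ => ?_
        rw [mul_div_assoc, mul_right_comm, mul_div_cancel₀ _ (hC j), mul_comm]
    _ = g m / g 0 * ∏ i ∈ P, μ i := by
        rw [prod_mul_distrib, Fin.prod_univ_eq_prod_range (fun j => g (j + 1) / g j),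
          prod_range_div_of_ne_zero g m hg_ne,
          prod_fiberwise_of_maps_to fun i _ => mem_univ (cls i)]
    _ = _ := by
        rw [hg_top, one_div, inv_mul_eq_div]
        simp only [hg, htraj0]

/-- The telescoping identity for the sequential sampling algorithm: for every
set `P` of pool members with quota-compliant profile, with `S_j = P ∩ N|_{ω_j}`, `d_j = |S_j|`,
`z_0 = 0`, `z_{j+1} = z_j + d_j·ω_j`, we have
`∏_j p_{j, z_j}(d_j) · ∏_j q_{j, d_j}(S_j) = (∏_{i∈P} μ_i) / φ_μ(0, 0)`,
where `p_{j,z}(d) = C_μ(j,d)·φ_μ(j+1, z + d·ω_j)/φ_μ(j,z)` and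
`q_{j,d}(S) = (∏_{i∈S} μ_i)/C_μ(j,d)`; hence the sequential sampling algorithm outputs each such
`P` with probability proportional to `∏_{i∈P} μ_i`. -/
theorem sequential_sampling_telescoping
    (n m : ℕ) {F : Type*} [Fintype F] {V : F → Type*} [∀ f, Fintype (V f)]
    (feat : Fin n → ∀ f : F, V f) (k : ℕ)
    (ℓ u : ((f : F) × V f) → ℕ) (f0 : F)
    (hℓu : ∀ fv, ℓ fv ≤ u fv) (huk : ∀ fv, u fv ≤ k)
    (w : Fin n → ((f : F) × V f) → ℕ)
    (hw : ∀ i f v, w i ⟨f, v⟩ = if feat i f = v then 1 else 0)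
    (Zbar : Set (((f : F) × V f) → ℕ))
    (hZ : Zbar = {z | (∀ fv, ℓ fv ≤ z fv ∧ z fv ≤ u fv) ∧ ∑ v : V f0, z ⟨f0, v⟩ = k})
    (ω : Fin m → ((f : F) × V f) → ℕ) (hω : Function.Injective ω)
    (cls : Fin n → Fin m) (hwcls : ∀ i, w i = ω (cls i))
    (μ : Fin n → ℝ) (hμ : ∀ i, 0 < μ i)
    (P : Finset (Fin n)) (hP : (∑ i ∈ P, w i) ∈ Zbar)
    (d : Fin m → ℕ) (hd : ∀ j, d j = (P.filter fun i => cls i = j).card)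
    (traj : ℕ → ((f : F) × V f) → ℕ)
    (htraj0 : traj 0 = 0)
    (htrajS : ∀ j : Fin m, traj ((j : ℕ) + 1) = traj (j : ℕ) + d j • ω j) :
    (∏ j : Fin m,
        classCoeff n m cls μ j (d j) *
            layerCount n m cls μ w Zbar ((j : ℕ) + 1) (traj ((j : ℕ) + 1)) /
          layerCount n m cls μ w Zbar (j : ℕ) (traj (j : ℕ))) *
      (∏ j : Fin m,
        (∏ i ∈ P.filter fun i => cls i = j, μ i) / classCoeff n m cls μ j (d j)) =
      (∏ i ∈ P, μ i) / layerCount n m cls μ w Zbar 0 0 :=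
  sequential_sampling_telescoping_general n m w Zbar ω cls hwcls μ hμ P hP d hd traj htraj0 htrajS
end

section
/- Let the sortition instance be κ-rich for some κ > 0, with n = |N| pool members and panel size k ≥ 1. Then under the uniform distribution over the set 𝒫 of panels, every pool member's selection probability satisfies π(i) = |𝒫(i)|/|𝒫| ≤ k/(κ^k · n). -/
open scoped Classical

/-- A sortition instance (features `feat`, panel set `Pan`, panel size `k`) is `κ`-rich if there
is a set `Wstar` of feature-value vectors present in the pool such that every vector in `Wstar`
is shared by at least `κ·n + k` pool members, and some panel consists solely of members with
vectors in `Wstar`. -/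
def IsRich {N : Type*} [Fintype N] {F : Type*} {V : F → Type*}
    (feat : N → ∀ f : F, V f) (Pan : Finset (Finset N)) (k : ℕ) (κ : ℝ) : Prop :=
  ∃ Wstar : Set (∀ f : F, V f),
    (∀ wv ∈ Wstar, ∃ i : N, feat i = wv) ∧
    (∀ wv ∈ Wstar,
      κ * (Fintype.card N) + k ≤ ((Finset.univ.filter fun i : N => feat i = wv).card : ℝ)) ∧
    ∃ P₀ ∈ Pan, ∀ i ∈ P₀, feat i ∈ Wstar

/-!
Replace the members of the panel `P₀` from the richness condition by pairwise distinct pool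
members with the same feature vectors. Every vector of `W*` is shared by at least `κn + k`
members, so each of the `k` replacements has at least `⌊κn⌋ + 1` free choices, and every
result is again a panel because the quotas only see feature vectors. A panel arises from at
most `k!` such substitutions, hence `|𝒫| ≥ (κn)^k / k!`. On the other hand at most
`C(n-1, k-1) ≤ n^(k-1) / (k-1)!` panels contain a given `i`, and the quotient of the two
bounds is `k / (κ^k n)`.
-/

open Finset

section DistinctReps

variable {α β : Type*} [Fintype α] [DecidableEq α] [Fintype β] [DecidableEq β]

/-- The choice functions are made total by the value `d` off `s`, so that they form a `Finset`. -/
def distinctReps (A : α → Finset β) (d : β) (s : Finset α) : Finset (α → β) :=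
  univ.filter fun g => Set.InjOn g s ∧ (∀ a ∈ s, g a ∈ A a) ∧ ∀ a ∉ s, g a = d

variable {A : α → Finset β} {d : β} {s : Finset α}

theorem mem_distinctReps {g : α → β} :
    g ∈ distinctReps A d s ↔ Set.InjOn g s ∧ (∀ a ∈ s, g a ∈ A a) ∧ ∀ a ∉ s, g a = d := by
  simp [distinctReps]

theorem update_mem_distinctReps_insert {g : α → β} {j : α} {x : β}
    (hg : g ∈ distinctReps A d s) (hj : j ∉ s) (hxA : x ∈ A j) (hxg : x ∉ s.image g) :
    Function.update g j x ∈ distinctReps A d (insert j s) := by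
  obtain ⟨ginj, gA, gd⟩ := mem_distinctReps.mp hg
  have hfix : ∀ a ∈ s, Function.update g j x a = g a := fun a ha =>
    Function.update_of_ne (ne_of_mem_of_not_mem ha hj) _ _
  refine mem_distinctReps.mpr ⟨?_, ?_, ?_⟩
  · rw [coe_insert, Set.injOn_insert (by simpa using hj), Function.update_self]
    refine ⟨ginj.congr fun a ha => (hfix a ha).symm, ?_⟩
    rintro ⟨a, ha, hax⟩
    exact hxg (mem_image.mpr ⟨a, ha, (hfix a ha).symm.trans hax⟩)
  · intro a ha
    rcases mem_insert.mp ha with rfl | ha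
    · rwa [Function.update_self]
    · rw [hfix a ha]; exact gA a ha
  · intro a ha
    rw [mem_insert, not_or] at ha
    rw [Function.update_of_ne ha.1]; exact gd a ha.2

theorem card_distinctReps_mul_le_card_insert {j : α} {c : ℕ} (hj : j ∉ s)
    (hc : ∀ g ∈ distinctReps A d s, c ≤ #(A j \ s.image g)) :
    #(distinctReps A d s) * c ≤ #(distinctReps A d (insert j s)) := by
  calc #(distinctReps A d s) * c
      ≤ ∑ g ∈ distinctReps A d s, #(A j \ s.image g) := by
        rw [← smul_eq_mul, ← sum_const]; exact sum_le_sum hc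
    _ = #((distinctReps A d s).sigma fun g => A j \ s.image g) := (card_sigma _ _).symm
    _ ≤ #(distinctReps A d (insert j s)) := by
      refine card_le_card_of_injOn (fun p => Function.update p.1 j p.2) ?_ ?_
      · rintro ⟨g, x⟩ hp
        obtain ⟨hg, hx⟩ := mem_sigma.mp hp
        exact update_mem_distinctReps_insert hg hj (mem_sdiff.mp hx).1 (mem_sdiff.mp hx).2
      · rintro ⟨g, x⟩ hp ⟨g', x'⟩ hp' heq
        have hgd := (mem_distinctReps.mp (mem_sigma.mp hp).1).2.2 j hj
        have hgd' := (mem_distinctReps.mp (mem_sigma.mp hp').1).2.2 j hj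
        have hx : x = x' := by simpa using congrFun heq j
        subst hx
        have hgg : g = g' := by
          funext a
          by_cases haj : a = j
          · rw [haj]; exact hgd.trans hgd'.symm
          · simpa [haj] using congrFun heq a
        rw [hgg]

theorem pow_card_le_card_distinctReps {b : ℕ} (hA : ∀ a ∈ s, #s + b ≤ #(A a)) :
    (b + 1) ^ #s ≤ #(distinctReps A d s) := by
  induction s using Finset.induction_on with
  | empty => simpa using ⟨fun _ => d, by simp [mem_distinctReps]⟩
  | @insert j s hj ih =>
    rw [card_insert_of_notMem hj] at hA ⊢
    have hAs : ∀ a ∈ s, #s + b ≤ #(A a) := fun a ha => by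
      have := hA a (mem_insert_of_mem ha); omega
    refine (Nat.mul_le_mul_right _ (ih hAs)).trans (card_distinctReps_mul_le_card_insert hj ?_)
    intro g _
    have := le_card_sdiff (s.image g) (A j)
    have := hA j (mem_insert_self j s)
    have : #(s.image g) ≤ #s := card_image_le
    omega

theorem card_filter_image_eq_le_factorial (Q : Finset β) :
    #{g ∈ distinctReps A d s | s.image g = Q} ≤ (#s).factorial := by
  set F := {g ∈ distinctReps A d s | s.image g = Q}
  have hbij : ∀ g ∈ F, Set.BijOn g s Q := fun g hg => by
    have hg := mem_filter.mp hg
    rw [← hg.2, coe_image]; exact (mem_distinctReps.mp hg.1).1.bijOn_image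
  let e : F → ((s : Set α) ≃ (Q : Set β)) := fun g => (hbij g g.2).equiv
  have he : Function.Injective e := by
    rintro ⟨g, hg⟩ ⟨g', hg'⟩ hgg
    have hgd := (mem_distinctReps.mp (mem_filter.mp hg).1).2.2
    have hgd' := (mem_distinctReps.mp (mem_filter.mp hg').1).2.2
    ext a
    by_cases ha : a ∈ s
    · simpa [e, Set.BijOn.equiv] using congrArg (fun e => (e ⟨a, ha⟩ : β)) hgg
    · show g a = g' a
      rw [hgd a ha, hgd' a ha]
  rcases F.eq_empty_or_nonempty with hF | ⟨g, hg⟩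
  · simp [hF]
  calc #F = Fintype.card F := (Fintype.card_coe F).symm
    _ ≤ Fintype.card ((s : Set α) ≃ (Q : Set β)) := Fintype.card_le_of_injective e he
    _ = (#s).factorial := by rw [Fintype.card_equiv (hbij g hg).equiv]; simp

end DistinctReps

theorem card_filter_image_eq {α γ : Type*} [DecidableEq α] {τ : α → γ} {P : Finset α}
    {g : α → α} (hg : Set.InjOn g P) (hτ : ∀ a ∈ P, τ (g a) = τ a)
    (p : γ → Prop) [DecidablePred p] :
    #{t ∈ P.image g | p (τ t)} = #{a ∈ P | p (τ a)} := by
  rw [filter_image, card_image_of_injOn (hg.mono (filter_subset _ _))]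
  exact congrArg card (filter_congr fun a ha => by rw [hτ a ha])

section Panels

variable {α γ : Type*} [Fintype α] [DecidableEq α]

theorem pow_le_factorial_mul_card_of_closed {S : Finset (Finset α)} {τ : α → γ}
    (hclosed : ∀ P ∈ S, ∀ g : α → α, Set.InjOn g P → (∀ a ∈ P, τ (g a) = τ a) → P.image g ∈ S)
    {P₀ : Finset α} (hP₀ : P₀ ∈ S) {b : ℕ} (htwins : ∀ a ∈ P₀, #P₀ + b ≤ #{t | τ t = τ a}) :
    (b + 1) ^ #P₀ ≤ (#P₀).factorial * #S := by
  rcases P₀.eq_empty_or_nonempty with rfl | ⟨d, -⟩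
  · simpa using card_pos.mpr ⟨_, hP₀⟩
  set A : α → Finset α := fun a => {t | τ t = τ a}
  have hτ : ∀ g ∈ distinctReps A d P₀, ∀ a ∈ P₀, τ (g a) = τ a := fun g hg a ha =>
    (mem_filter.mp ((mem_distinctReps.mp hg).2.1 a ha)).2
  refine (pow_card_le_card_distinctReps (d := d) htwins).trans
    (card_le_mul_card_image_of_maps_to (f := fun g => P₀.image g) (fun g hg => ?_) _
      fun Q _ => ?_)
  · exact hclosed P₀ hP₀ g (mem_distinctReps.mp hg).1 (hτ g hg)
  · exact card_filter_image_eq_le_factorial Q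

theorem card_filter_mem_le_choose {𝒜 : Finset (Finset α)} {k : ℕ} (h𝒜 : ∀ P ∈ 𝒜, #P = k)
    (hk : 1 ≤ k) (i : α) : #{P ∈ 𝒜 | i ∈ P} ≤ (Fintype.card α - 1).choose (k - 1) := by
  calc #{P ∈ 𝒜 | i ∈ P} ≤ #{P ∈ univ.powersetCard k | {i} ⊆ P} :=
        card_le_card fun P hP => by
          obtain ⟨hP, hiP⟩ := mem_filter.mp hP
          simpa [mem_powersetCard, h𝒜 P hP] using hiP
    _ = (Fintype.card α - 1).choose (k - 1) := by
      rw [card_filter_powersetCard_subset _ _ _ (subset_univ _) (by simpa using hk)]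
      simp

end Panels

section Sortition

variable {N F : Type*} {V : F → Type*} [Fintype N]

noncomputable def panels (feat : N → ∀ f : F, V f) (k : ℕ) (ℓ u : ((f : F) × V f) → ℕ) :
    Finset (Finset N) :=
  Finset.univ.filter fun P : Finset N =>
    P.card = k ∧ ∀ (f : F) (v : V f),
      ℓ ⟨f, v⟩ ≤ (P.filter fun t => feat t f = v).card ∧
      (P.filter fun t => feat t f = v).card ≤ u ⟨f, v⟩

variable {feat : N → ∀ f : F, V f} {k : ℕ} {ℓ u : ((f : F) × V f) → ℕ}

theorem card_of_mem_panels {P : Finset N} (hP : P ∈ panels feat k ℓ u) : #P = k :=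
  (mem_filter.mp hP).2.1

theorem image_mem_panels [DecidableEq N] {P : Finset N} (hP : P ∈ panels feat k ℓ u)
    {g : N → N} (hg : Set.InjOn g P) (hfeat : ∀ a ∈ P, feat (g a) = feat a) :
    P.image g ∈ panels feat k ℓ u := by
  obtain ⟨-, hcard, hquota⟩ := mem_filter.mp hP
  refine mem_filter.mpr ⟨mem_univ _, by rw [card_image_of_injOn hg, hcard], fun f v => ?_⟩
  rw [card_filter_image_eq hg hfeat fun w => w f = v]
  exact hquota f v

theorem pow_le_factorial_mul_card_panels [DecidableEq N] {κ : ℝ} (hκ : 0 ≤ κ)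
    (hrich : IsRich feat (panels feat k ℓ u) k κ) :
    (κ * Fintype.card N) ^ k ≤ k.factorial * #(panels feat k ℓ u) := by
  obtain ⟨W, -, hW, P₀, hP₀, hP₀W⟩ := hrich
  set b := ⌊κ * Fintype.card N⌋₊
  have htwins : ∀ a ∈ P₀, #P₀ + b ≤ #{t | feat t = feat a} := fun a ha => by
    have hb : (b : ℝ) ≤ κ * Fintype.card N := Nat.floor_le (by positivity)
    have := hW _ (hP₀W a ha)
    rw [card_of_mem_panels hP₀]
    exact_mod_cast (by push_cast; linarith : ((k + b : ℕ) : ℝ) ≤ #{t | feat t = feat a})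
  have := pow_le_factorial_mul_card_of_closed (fun P hP g => image_mem_panels hP) hP₀ htwins
  rw [card_of_mem_panels hP₀] at this
  calc (κ * Fintype.card N) ^ k ≤ ((b + 1 : ℕ) : ℝ) ^ k := by
        gcongr; push_cast; exact (Nat.lt_floor_add_one _).le
    _ ≤ k.factorial * #(panels feat k ℓ u) := by exact_mod_cast this

end Sortition

/-- In a `κ`-rich sortition instance with `n` pool members and panel size
`k ≥ 1`, under the uniform distribution over the panel set every pool member's selection
probability satisfies `π(i) = |Pan(i)|/|Pan| ≤ k/(κ^k · n)`. -/
theorem uniform_selection_probability_bound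
    {N : Type*} [Fintype N] [DecidableEq N]
    {F : Type*} {V : F → Type*}
    (feat : N → ∀ f : F, V f) (k : ℕ) (hk : 1 ≤ k)
    (ℓ u : ((f : F) × V f) → ℕ)
    (Pan : Finset (Finset N))
    (hPan : Pan = Finset.univ.filter fun P : Finset N =>
      P.card = k ∧ ∀ (f : F) (v : V f),
        ℓ ⟨f, v⟩ ≤ (P.filter fun t => feat t f = v).card ∧
        (P.filter fun t => feat t f = v).card ≤ u ⟨f, v⟩)
    (κ : ℝ) (hκ : 0 < κ) (hrich : IsRich feat Pan k κ) :
    ∀ i : N, ((Pan.filter fun P => i ∈ P).card : ℝ) / Pan.card ≤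
      k / (κ ^ k * Fintype.card N) := by
  intro i
  change Pan = panels feat k ℓ u at hPan
  subst hPan
  set n := Fintype.card N
  have hn : (0 : ℝ) < n := by exact_mod_cast Fintype.card_pos_iff.mpr ⟨i⟩
  have hlower := pow_le_factorial_mul_card_panels hκ.le hrich
  have hupper : (#{P ∈ panels feat k ℓ u | i ∈ P} : ℝ) ≤ n ^ (k - 1) / (k - 1).factorial :=
    calc (#{P ∈ panels feat k ℓ u | i ∈ P} : ℝ) ≤ ((n - 1).choose (k - 1) : ℕ) := by
          exact_mod_cast card_filter_mem_le_choose (fun P => card_of_mem_panels) hk i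
      _ ≤ ((n - 1 : ℕ) : ℝ) ^ (k - 1) / (k - 1).factorial := Nat.choose_le_pow_div _ _
      _ ≤ n ^ (k - 1) / (k - 1).factorial := by gcongr; exact_mod_cast Nat.sub_le n 1
  have hpos : (0 : ℝ) < (κ * n) ^ k := by positivity
  calc (#{P ∈ panels feat k ℓ u | i ∈ P} : ℝ) / #(panels feat k ℓ u)
      ≤ #{P ∈ panels feat k ℓ u | i ∈ P} * k.factorial / (κ * n) ^ k := by
        rw [div_le_div_iff₀ (pos_of_mul_pos_right (hpos.trans_le hlower) (by positivity)) hpos]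
        rw [mul_assoc]; exact mul_le_mul_of_nonneg_left hlower (by positivity)
    _ ≤ n ^ (k - 1) / (k - 1).factorial * k.factorial / (κ * n) ^ k := by gcongr
    _ = k / (κ ^ k * n) := by
      obtain ⟨m, rfl⟩ := Nat.exists_eq_add_of_le' hk
      rw [Nat.add_sub_cancel, Nat.factorial_succ]
      push_cast
      field_simp
      ring
end

section
/- Let k, m be natural numbers, ι a finite index set, and p : ι → ℕ with Σ_{w∈ι} p(w) = k. Then ∏_{w∈ι} C(m + k, p(w)) ≥ m^k / k!, where C(a,b) is the binomial coefficient and the inequality is between rational numbers. (In particular, ∏_{w∈ι} p(w)! ≤ k! and ∏_{w∈ι} ∏_{i=0}^{p(w)−1} (m + k − i) ≥ m^k.) -/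
/-- For natural numbers `k, m`, a finite index set `ι`, and `p : ι → ℕ` with
`∑_w p w = k`, we have `∏_w C(m + k, p w) ≥ m^k / k!` (as rational numbers); in particular
`∏_w (p w)! ≤ k!` and `∏_w ∏_{i=0}^{p w − 1} (m + k − i) ≥ m^k`. -/
theorem prod_choose_ge_pow_div_factorial
    (k m : ℕ) {ι : Type*} [Fintype ι] (p : ι → ℕ) (hp : ∑ w, p w = k) :
    (m : ℚ) ^ k / (k.factorial : ℚ) ≤ ∏ w, (((m + k).choose (p w) : ℕ) : ℚ) ∧
    (∏ w, (p w).factorial) ≤ k.factorial ∧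
    m ^ k ≤ ∏ w, ∏ i ∈ Finset.range (p w), (m + k - i) := by
  have h2 : (∏ w, (p w).factorial) ≤ k.factorial := by
    rw [← hp]
    exact Nat.le_of_dvd (Nat.factorial_pos _)
      (Nat.prod_factorial_dvd_factorial_sum _ _)
  have h3 : m ^ k ≤ ∏ w, ∏ i ∈ Finset.range (p w), (m + k - i) := by
    calc m ^ k = ∏ w, m ^ (p w) := by rw [← hp, ← Finset.prod_pow_eq_pow_sum]
    _ ≤ _ := by
        apply Finset.prod_le_prod (fun _ _ => Nat.zero_le _)
        intro w _
        calc m ^ p w = ∏ _i ∈ Finset.range (p w), m := by simp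
        _ ≤ _ := by
          apply Finset.prod_le_prod (fun _ _ => Nat.zero_le _)
          intro i hi
          have : i < k := lt_of_lt_of_le (Finset.mem_range.mp hi)
            (hp ▸ Finset.single_le_sum (fun _ _ => Nat.zero_le _) (Finset.mem_univ w))
          omega
  refine ⟨?_, h2, h3⟩
  have key : ∀ w, (((m + k).choose (p w) : ℕ) : ℚ) =
      ((∏ i ∈ Finset.range (p w), (m + k - i) : ℕ) : ℚ) / ((p w).factorial : ℚ) := by
    intro w
    rw [← Nat.descFactorial_eq_prod_range, Nat.descFactorial_eq_factorial_mul_choose]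
    push_cast
    rw [mul_comm, mul_div_assoc, div_self (by exact_mod_cast (p w).factorial_ne_zero), mul_one]
  rw [Finset.prod_congr rfl (fun w _ => key w), Finset.prod_div_distrib,
    ← Nat.cast_prod, ← Nat.cast_prod]
  apply div_le_div₀ (by positivity) (by exact_mod_cast h3)
    (by exact_mod_cast Finset.prod_pos fun w _ => (p w).factorial_pos)
    (by exact_mod_cast h2)
end

section
/- Let C ⊆ N be a coalition of size c, and let f̃ be reported features agreeing with the true features f on N∖C. Let 𝒫 be the set of panels under the true features and 𝒫̃ under the reported features (same quotas ℓ, u and panel size k). Then for any feature-value pair (f, v), any λ ∈ Δ(𝒫), and any λ̃ ∈ Δ(𝒫̃): Σ_{i ∈ N : f(i) = v} (π_{λ̃}(i) − π_λ(i)) ≤ (u_{f,v} − ℓ_{f,v}) + c · max_{i∈N} π_{λ̃}(i). -/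
open scoped Classical


lemma swap_sum_aux {N : Type*} [Fintype N] [DecidableEq N]
    (μ : Finset N → ℝ) (Pan : Finset (Finset N)) (S : Finset N) :
    ∑ i ∈ S, ∑ P ∈ Pan.filter (fun P => i ∈ P), μ P
      = ∑ P ∈ Pan, μ P * ((P ∩ S).card : ℝ) := by
  simp_rw [Finset.sum_filter]
  rw [Finset.sum_comm]
  refine Finset.sum_congr rfl fun P _ => ?_
  rw [Finset.sum_ite_mem, Finset.sum_const, nsmul_eq_mul, Finset.inter_comm]
  ring

/-- Let `C` be a coalition of size `c` whose reported features `feat'` agree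
with the true features `feat` off `C`, let `Pan` and `Pant` be the panel sets under the true
and the reported features (same quotas `ℓ, u` and panel size `k`). Then for any feature-value
pair `(f0, v0)`, any distribution `lam` on `Pan` and any distribution `lamt` on `Pant`,
`∑_{i : feat i f0 = v0} (π_{lamt}(i) − π_{lam}(i)) ≤ (u_{f0,v0} − ℓ_{f0,v0}) + c·max_i π_{lamt}(i)`. -/
theorem composition_manipulation_bound
    {N : Type*} [Fintype N] [DecidableEq N] [Nonempty N]
    {F : Type*} {V : F → Type*}
    (feat feat' : N → ∀ f : F, V f) (k : ℕ) (ℓ u : ((f : F) × V f) → ℕ)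
    (hℓu : ∀ fv, ℓ fv ≤ u fv) (huk : ∀ fv, u fv ≤ k)
    (C : Finset N) (hagree : ∀ i ∉ C, feat' i = feat i)
    (Pan Pant : Finset (Finset N))
    (hPan : Pan = Finset.univ.filter fun P : Finset N =>
      P.card = k ∧ ∀ (f : F) (v : V f),
        ℓ ⟨f, v⟩ ≤ (P.filter fun t => feat t f = v).card ∧
        (P.filter fun t => feat t f = v).card ≤ u ⟨f, v⟩)
    (hPant : Pant = Finset.univ.filter fun P : Finset N =>
      P.card = k ∧ ∀ (f : F) (v : V f),
        ℓ ⟨f, v⟩ ≤ (P.filter fun t => feat' t f = v).card ∧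
        (P.filter fun t => feat' t f = v).card ≤ u ⟨f, v⟩)
    (hPanne : Pan.Nonempty) (hPantne : Pant.Nonempty)
    (lam lamt : Finset N → ℝ)
    (hlam0 : ∀ P, 0 ≤ lam P) (hlamsupp : ∀ P ∉ Pan, lam P = 0)
    (hlam1 : ∑ P ∈ Pan, lam P = 1)
    (hlamt0 : ∀ P, 0 ≤ lamt P) (hlamtsupp : ∀ P ∉ Pant, lamt P = 0)
    (hlamt1 : ∑ P ∈ Pant, lamt P = 1)
    (f0 : F) (v0 : V f0) :
    ∑ i ∈ Finset.univ.filter (fun i => feat i f0 = v0),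
        ((∑ P ∈ Pant.filter fun P => i ∈ P, lamt P) -
          (∑ P ∈ Pan.filter fun P => i ∈ P, lam P)) ≤
      ((u ⟨f0, v0⟩ : ℝ) - (ℓ ⟨f0, v0⟩ : ℝ)) +
        C.card * (Finset.univ.sup' Finset.univ_nonempty
          fun i : N => ∑ P ∈ Pant.filter fun P => i ∈ P, lamt P) := by

  set A := Finset.univ.filter (fun i => feat i f0 = v0) with hA
  set A' := Finset.univ.filter (fun i => feat' i f0 = v0) with hA'
  set M := Finset.univ.sup' Finset.univ_nonempty
      (fun i : N => ∑ P ∈ Pant.filter fun P => i ∈ P, lamt P) with hMdef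
  set pit := fun i : N => ∑ P ∈ Pant.filter (fun P => i ∈ P), lamt P with hpit
  have hpit0 : ∀ i : N, 0 ≤ pit i := fun i => Finset.sum_nonneg fun P _ => hlamt0 P
  have hMle : ∀ i : N, pit i ≤ M := fun i => Finset.le_sup' _ (Finset.mem_univ i)
  have hM0 : 0 ≤ M := le_trans (hpit0 (Classical.arbitrary N)) (hMle _)
  have hinterA : ∀ P : Finset N, P ∩ A = P.filter (fun t => feat t f0 = v0) := by
    intro P; ext t; simp [hA]
  have hinterA' : ∀ P : Finset N, P ∩ A' = P.filter (fun t => feat' t f0 = v0) := by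
    intro P; ext t; simp [hA']
  have hlow : (ℓ ⟨f0, v0⟩ : ℝ) ≤ ∑ i ∈ A, ∑ P ∈ Pan.filter (fun P => i ∈ P), lam P := by
    rw [swap_sum_aux]
    calc (ℓ ⟨f0, v0⟩ : ℝ) = ∑ P ∈ Pan, lam P * (ℓ ⟨f0, v0⟩ : ℝ) := by
          rw [← Finset.sum_mul, hlam1, one_mul]
      _ ≤ ∑ P ∈ Pan, lam P * ((P ∩ A).card : ℝ) := by
          refine Finset.sum_le_sum fun P hP => ?_
          refine mul_le_mul_of_nonneg_left ?_ (hlam0 P)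
          rw [hinterA]
          exact_mod_cast ((Finset.mem_filter.mp (hPan ▸ hP)).2.2 f0 v0).1
  have hup : ∑ i ∈ A', pit i ≤ (u ⟨f0, v0⟩ : ℝ) := by
    simp only [hpit]
    rw [swap_sum_aux]
    calc ∑ P ∈ Pant, lamt P * ((P ∩ A').card : ℝ)
        ≤ ∑ P ∈ Pant, lamt P * (u ⟨f0, v0⟩ : ℝ) := by
          refine Finset.sum_le_sum fun P hP => ?_
          refine mul_le_mul_of_nonneg_left ?_ (hlamt0 P)
          rw [hinterA']
          exact_mod_cast ((Finset.mem_filter.mp (hPant ▸ hP)).2.2 f0 v0).2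
      _ = (u ⟨f0, v0⟩ : ℝ) := by rw [← Finset.sum_mul, hlamt1, one_mul]
  have h1 : ∑ i ∈ A.filter (fun i => i ∉ C), pit i ≤ ∑ i ∈ A', pit i := by
    refine Finset.sum_le_sum_of_subset_of_nonneg ?_ (fun i _ _ => hpit0 i)
    intro i hi
    simp only [hA, hA', Finset.mem_filter, Finset.mem_univ, true_and] at hi ⊢
    rw [hagree i hi.2]
    exact hi.1
  have h2 : ∑ i ∈ A.filter (fun i => i ∈ C), pit i ≤ (C.card : ℝ) * M := by
    calc ∑ i ∈ A.filter (fun i => i ∈ C), pit i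
        ≤ ∑ _i ∈ A.filter (fun i => i ∈ C), M := Finset.sum_le_sum fun i _ => hMle i
      _ = ((A.filter (fun i => i ∈ C)).card : ℝ) * M := by
          rw [Finset.sum_const, nsmul_eq_mul]
      _ ≤ (C.card : ℝ) * M := by
          refine mul_le_mul_of_nonneg_right ?_ hM0
          exact_mod_cast Finset.card_le_card
            (fun i hi => (Finset.mem_filter.mp hi).2)
  have hsplit : ∑ i ∈ A, pit i ≤ ∑ i ∈ A', pit i + (C.card : ℝ) * M := by
    rw [← Finset.sum_filter_add_sum_filter_not A (fun i => i ∈ C) pit]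
    linarith
  rw [Finset.sum_sub_distrib]
  have := hsplit
  linarith
end

section
/- Let the sortition instance (with n pool members and panel size k) be κ-rich, let 0 ≤ κ' < κ, and let C ⊆ N be a coalition of size c ≤ κ'·n misreporting their feature-value vectors arbitrarily. Then the manipulated instance (same pool, same quotas, features changed only on C) is (κ − κ')-rich; in particular its panel set 𝒫̃ is nonempty. -/
open scoped Classical

/-- Auxiliary: an injection between finsets exists when cards compare. -/
lemma exists_injOn_finset {α : Type*} [DecidableEq α] [Nonempty α] (s t : Finset α)
    (h : s.card ≤ t.card) : ∃ ψ : α → α, Set.InjOn ψ ↑s ∧ ∀ i ∈ s, ψ i ∈ t := by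
  have hle : (↑s : Set α).encard ≤ (↑t : Set α).encard := by
    rw [Set.encard_coe_eq_coe_finsetCard, Set.encard_coe_eq_coe_finsetCard]
    exact_mod_cast h
  obtain ⟨ψ, hsub, hinj⟩ := (s.finite_toSet).exists_injOn_of_encard_le hle
  exact ⟨ψ, hinj, fun i hi => hsub hi⟩

/-- If a sortition instance is `κ`-rich and a coalition `C` of size
`c ≤ κ'·n` (with `0 ≤ κ' < κ`) misreports its feature values arbitrarily, then the manipulated
instance (same pool and quotas, features changed only on `C`) is `(κ − κ')`-rich; in particular
its panel set is nonempty. -/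
theorem manipulated_instance_rich
    {N : Type*} [Fintype N] [DecidableEq N]
    {F : Type*} {V : F → Type*}
    (feat feat' : N → ∀ f : F, V f) (k : ℕ) (ℓ u : ((f : F) × V f) → ℕ)
    (Pan Pant : Finset (Finset N))
    (hPan : Pan = Finset.univ.filter fun P : Finset N =>
      P.card = k ∧ ∀ (f : F) (v : V f),
        ℓ ⟨f, v⟩ ≤ (P.filter fun t => feat t f = v).card ∧
        (P.filter fun t => feat t f = v).card ≤ u ⟨f, v⟩)
    (hPant : Pant = Finset.univ.filter fun P : Finset N =>
      P.card = k ∧ ∀ (f : F) (v : V f),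
        ℓ ⟨f, v⟩ ≤ (P.filter fun t => feat' t f = v).card ∧
        (P.filter fun t => feat' t f = v).card ≤ u ⟨f, v⟩)
    (κ κ' : ℝ) (hκ : 0 < κ) (hκ'0 : 0 ≤ κ') (hκ' : κ' < κ)
    (C : Finset N) (hC : (C.card : ℝ) ≤ κ' * Fintype.card N)
    (hagree : ∀ i ∉ C, feat' i = feat i)
    (hrich : IsRich feat Pan k κ) :
    IsRich feat' Pant k (κ - κ') ∧ Pant.Nonempty := by
  obtain ⟨Wstar, hrep, hcount, P₀, hP₀Pan, hP₀W⟩ := hrich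
  rw [hPan, Finset.mem_filter] at hP₀Pan
  obtain ⟨-, hP₀card, hquota⟩ := hP₀Pan
  set n : ℕ := Fintype.card N with hn
  -- new count bound, valid for every wv ∈ Wstar
  have hcount' : ∀ wv ∈ Wstar,
      (κ - κ') * n + k ≤ ((Finset.univ.filter fun i : N => feat' i = wv).card : ℝ) := by
    intro wv hwv
    have hsub : (Finset.univ.filter fun i : N => feat i = wv) ⊆
        (Finset.univ.filter fun i : N => feat' i = wv) ∪ C := by
      intro i hi
      simp only [Finset.mem_filter, Finset.mem_univ, true_and] at hi
      by_cases hiC : i ∈ C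
      · exact Finset.mem_union_right _ hiC
      · exact Finset.mem_union_left _ (by
          simp only [Finset.mem_filter, Finset.mem_univ, true_and]
          rw [hagree i hiC]; exact hi)
    have h1 := hcount wv hwv
    have h2 : ((Finset.univ.filter fun i : N => feat i = wv).card : ℝ) ≤
        ((Finset.univ.filter fun i : N => feat' i = wv).card : ℝ) + C.card := by
      have h := le_trans (Finset.card_le_card hsub)
        (Finset.card_union_le (Finset.univ.filter fun i : N => feat' i = wv) C)
      exact_mod_cast h
    linarith [h1, h2, hC]
  -- representation for feat'
  have hrep' : ∀ wv ∈ Wstar, ∃ i : N, feat' i = wv := by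
    intro wv hwv
    obtain ⟨i₀, -⟩ := hrep wv hwv
    have hn1 : (1 : ℝ) ≤ n := by
      have : 0 < n := Fintype.card_pos_iff.mpr ⟨i₀⟩
      exact_mod_cast this
    have hpos : (0 : ℝ) < ((Finset.univ.filter fun i : N => feat' i = wv).card : ℝ) := by
      have := hcount' wv hwv
      nlinarith [this, hn1, sub_pos.mpr hκ']
    have : (Finset.univ.filter fun i : N => feat' i = wv).Nonempty := by
      rw [← Finset.card_pos]; exact_mod_cast hpos
    obtain ⟨i, hi⟩ := this
    simp only [Finset.mem_filter] at hi
    exact ⟨i, hi.2⟩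
  -- the replacement construction
  have hNE : Nonempty N ∨ (P₀ ∩ C) = ∅ := by
    rcases isEmpty_or_nonempty N with h | h
    · right; exact Finset.eq_empty_of_isEmpty _
    · left; exact h
  -- fibers
  set A : (∀ f : F, V f) → Finset N := fun w => (P₀ ∩ C).filter fun i => feat i = w with hA
  set B : (∀ f : F, V f) → Finset N :=
    fun w => Finset.univ.filter fun j => feat j = w ∧ j ∉ C ∧ j ∉ P₀ with hB
  have hAB : ∀ i ∈ P₀ ∩ C, (A (feat i)).card ≤ (B (feat i)).card := by
    intro i hi
    rw [Finset.mem_inter] at hi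
    set w := feat i with hw
    have hwW : w ∈ Wstar := hP₀W i hi.1
    -- partition: {feat = w} ⊆ B w ∪ C ∪ (P₀ \ C filtered)
    have hsub : (Finset.univ.filter fun j : N => feat j = w) ⊆
        B w ∪ C ∪ (P₀ \ C).filter fun j => feat j = w := by
      intro j hj
      simp only [Finset.mem_filter, Finset.mem_univ, true_and] at hj
      by_cases hjC : j ∈ C
      · exact Finset.mem_union_left _ (Finset.mem_union_right _ hjC)
      · by_cases hjP : j ∈ P₀
        · exact Finset.mem_union_right _ (by
            simp [Finset.mem_filter, Finset.mem_sdiff, hjP, hjC, hj])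
        · exact Finset.mem_union_left _ (Finset.mem_union_left _ (by
            simp [hB, hj, hjC, hjP]))
    have hcard1 : ((Finset.univ.filter fun j : N => feat j = w).card : ℝ) ≤
        (B w).card + C.card + ((P₀ \ C).filter fun j => feat j = w).card := by
      have h1 := Finset.card_le_card hsub
      have h2 := Finset.card_union_le (B w ∪ C) ((P₀ \ C).filter fun j => feat j = w)
      have h3 := Finset.card_union_le (B w) C
      push_cast
      have : ((Finset.univ.filter fun j : N => feat j = w).card : ℕ) ≤
          (B w).card + C.card + ((P₀ \ C).filter fun j => feat j = w).card :=
        le_trans h1 (le_trans h2 (by omega))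
      exact_mod_cast this
    -- a_w + b_w ≤ k
    have hab : (A w).card + ((P₀ \ C).filter fun j => feat j = w).card ≤ k := by
      have hdisj : Disjoint (A w) ((P₀ \ C).filter fun j => feat j = w) := by
        apply Finset.disjoint_left.mpr
        intro x hx hx'
        simp only [hA, Finset.mem_filter, Finset.mem_inter] at hx
        simp only [Finset.mem_filter, Finset.mem_sdiff] at hx'
        exact hx'.1.2 hx.1.2
      have hsub2 : A w ∪ (P₀ \ C).filter (fun j => feat j = w) ⊆ P₀ := by
        intro x hx
        rcases Finset.mem_union.mp hx with h | h
        · simp only [hA, Finset.mem_filter, Finset.mem_inter] at h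
          exact h.1.1
        · simp only [Finset.mem_filter, Finset.mem_sdiff] at h
          exact h.1.1
      calc (A w).card + ((P₀ \ C).filter fun j => feat j = w).card
          = (A w ∪ (P₀ \ C).filter (fun j => feat j = w)).card :=
            (Finset.card_union_of_disjoint hdisj).symm
        _ ≤ P₀.card := Finset.card_le_card hsub2
        _ = k := hP₀card
    have hcw := hcount w hwW
    -- real arithmetic: κn + k ≤ |B| + κ'n + a, and A + a ≤ k gives A ≤ |B| since (κ-κ')n ≥ 0
    have hnn : (0 : ℝ) ≤ (κ - κ') * n := by
      have : (0:ℝ) ≤ (n : ℝ) := Nat.cast_nonneg _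
      nlinarith [sub_pos.mpr hκ']
    have habR : ((A w).card : ℝ) + ((P₀ \ C).filter fun j => feat j = w).card ≤ k := by
      exact_mod_cast hab
    have : ((A w).card : ℝ) ≤ ((B w).card : ℝ) := by nlinarith [hcw, hcard1, hC, habR, hnn]
    exact_mod_cast this
  -- choose per-fiber injections
  have hψ : ∀ w : (∀ f : F, V f), ∃ ψ : N → N,
      ((A w).card ≤ (B w).card → (Set.InjOn ψ ↑(A w) ∧ ∀ i ∈ A w, ψ i ∈ B w)) := by
    intro w
    by_cases h : (A w).card ≤ (B w).card
    · rcases isEmpty_or_nonempty N with hE | hNE'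
      · exact ⟨id, fun _ => ⟨fun x hx y hy _ => Subsingleton.elim x y,
          fun i hi => absurd (Finset.mem_coe.mpr hi) (by simp [Finset.eq_empty_of_isEmpty (A w)])⟩⟩
      · obtain ⟨ψ, h1, h2⟩ := exists_injOn_finset (A w) (B w) h
        exact ⟨ψ, fun _ => ⟨h1, h2⟩⟩
    · exact ⟨id, fun hc => absurd hc h⟩
  choose Φ hΦ using hψ
  -- the substitution map
  set σ : N → N := fun i => if i ∈ C then Φ (feat i) i else i with hσ
  have hmemA : ∀ i ∈ P₀ ∩ C, i ∈ A (feat i) := by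
    intro i hi; simp [hA, Finset.mem_filter, hi]
  have hσB : ∀ i ∈ P₀ ∩ C, σ i ∈ B (feat i) := by
    intro i hi
    have hiC : i ∈ C := (Finset.mem_inter.mp hi).2
    have := (hΦ (feat i) (hAB i hi)).2 i (hmemA i hi)
    simpa [hσ, hiC] using this
  have hσfeat : ∀ i ∈ P₀, feat' (σ i) = feat i := by
    intro i hi
    by_cases hiC : i ∈ C
    · have hB' := hσB i (Finset.mem_inter.mpr ⟨hi, hiC⟩)
      simp only [hB, Finset.mem_filter, Finset.mem_univ, true_and] at hB'
      rw [hagree _ hB'.2.1, hB'.1]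
    · simp only [hσ, if_neg hiC]
      exact hagree i hiC
  have hσnotP : ∀ i ∈ P₀, i ∈ C → σ i ∉ P₀ := by
    intro i hi hiC
    have hB' := hσB i (Finset.mem_inter.mpr ⟨hi, hiC⟩)
    simp only [hB, Finset.mem_filter, Finset.mem_univ, true_and] at hB'
    exact hB'.2.2
  have hσinj : Set.InjOn σ ↑P₀ := by
    intro i hi j hj hij
    rw [Finset.mem_coe] at hi hj
    by_cases hiC : i ∈ C <;> by_cases hjC : j ∈ C
    · -- both in C
      have hBi := hσB i (Finset.mem_inter.mpr ⟨hi, hiC⟩)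
      have hBj := hσB j (Finset.mem_inter.mpr ⟨hj, hjC⟩)
      simp only [hB, Finset.mem_filter, Finset.mem_univ, true_and] at hBi hBj
      have hfeat : feat i = feat j := by rw [← hBi.1, ← hBj.1, hij]
      have hAi : i ∈ A (feat i) := hmemA i (Finset.mem_inter.mpr ⟨hi, hiC⟩)
      have hAj : j ∈ A (feat i) := by
        rw [hfeat]; exact hmemA j (Finset.mem_inter.mpr ⟨hj, hjC⟩)
      have hinjw := (hΦ (feat i) (hAB i (Finset.mem_inter.mpr ⟨hi, hiC⟩))).1
      apply hinjw (Finset.mem_coe.mpr hAi) (Finset.mem_coe.mpr hAj)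
      simp only [hσ, if_pos hiC, if_pos hjC] at hij
      rw [← hfeat] at hij
      exact hij
    · exfalso
      have : σ j = j := by simp [hσ, hjC]
      have h1 := hσnotP i hi hiC
      rw [hij, this] at h1
      exact h1 hj
    · exfalso
      have : σ i = i := by simp [hσ, hiC]
      have h1 := hσnotP j hj hjC
      rw [← hij, this] at h1
      exact h1 hi
    · simpa [hσ, hiC, hjC] using hij
  -- new panel
  set P' : Finset N := P₀.image σ with hP'
  have hP'card : P'.card = k := by
    rw [hP', Finset.card_image_of_injOn hσinj, hP₀card]
  have hfilter : ∀ (f : F) (v : V f),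
      (P'.filter fun t => feat' t f = v).card = (P₀.filter fun t => feat t f = v).card := by
    intro f v
    have h1 : P'.filter (fun t => feat' t f = v) =
        (P₀.filter fun i => feat' (σ i) f = v).image σ := by
      rw [hP', Finset.filter_image]
    have h2 : (P₀.filter fun i => feat' (σ i) f = v) = P₀.filter fun i => feat i f = v := by
      apply Finset.filter_congr
      intro i hi
      rw [hσfeat i hi]
    rw [h1, h2, Finset.card_image_of_injOn]
    exact hσinj.mono (Finset.coe_subset.mpr (Finset.filter_subset _ _))
  have hP'Pant : P' ∈ Pant := by
    rw [hPant, Finset.mem_filter]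
    refine ⟨Finset.mem_univ _, hP'card, fun f v => ?_⟩
    rw [hfilter f v]
    exact hquota f v
  have hP'W : ∀ j ∈ P', feat' j ∈ Wstar := by
    intro j hj
    obtain ⟨i, hi, rfl⟩ := Finset.mem_image.mp hj
    rw [hσfeat i hi]
    exact hP₀W i hi
  exact ⟨⟨Wstar, hrep', hcount', P', hP'Pant, hP'W⟩, ⟨P', hP'Pant⟩⟩
end

section
/- Let the sortition instance be κ-rich with n pool members and panel size k ≥ 1, and let c ≤ κ'·n for some 0 ≤ κ' < κ. Then the composition manipulability of uniform panel selection (MaxEntropy) satisfies: for every coalition C of size c, every joint misreport, and every feature-value pair (f,v), Σ_{i ∈ N : f(i) = v} (π̃(i) − π(i)) ≤ (u_{f,v} − ℓ_{f,v}) + c·k/((κ−κ')^k · n), where π and π̃ are selection probabilities under the uniform distributions over the true and manipulated panel sets and f(i) refers to the true feature values. -/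
open scoped Classical

/-!
Every true panel seats at least `ℓ` members of the group `{i | feat i f0 = v0}`, so the group's
expected number of seats under the true panels is at least `ℓ`. Every manipulated panel seats at
most `u` members *reporting* `v0`, and a group member reporting otherwise belongs to the coalition;
so under the manipulated panels the group expects at most `u` seats plus the expected number of
seated coalition members. That last term is small because the manipulated panel set is large:
richness provides a panel `P₀` whose feature vectors are each shared by at least `(κ - κ')n + k`
honest pool members, and every set of honest members with the same vector profile as `P₀` is a
manipulated panel. Hence there are at least `((κ - κ')n)^k / k!` manipulated panels, while at most
`(k / n) · C(n, k) ≤ k n^(k-1) / k!` of them contain any fixed person.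
-/

open Finset Nat

section Counting

lemma pow_le_descFactorial {r : ℝ} (hr : 0 ≤ r) {a m : ℕ} (h : r + m ≤ a + 1) :
    r ^ m ≤ a.descFactorial m := by
  have hma : m ≤ a + 1 := by exact_mod_cast (le_add_of_nonneg_left hr).trans h
  calc r ^ m ≤ ((a + 1 - m : ℕ) : ℝ) ^ m := by
        gcongr
        rw [Nat.cast_sub hma]; push_cast; linarith
    _ ≤ a.descFactorial m := by exact_mod_cast Nat.pow_sub_le_descFactorial a m

lemma pow_le_factorial_mul_prod_choose {β : Type*} (W : Finset β) (m a : β → ℕ) {r : ℝ}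
    (hr : 0 ≤ r) (h : ∀ w ∈ W, r + m w ≤ a w + 1) :
    r ^ (∑ w ∈ W, m w) ≤ (∑ w ∈ W, m w)! * ∏ w ∈ W, ((a w).choose (m w) : ℝ) := by
  have hfact : ((∏ w ∈ W, (m w)! : ℕ) : ℝ) ≤ (∑ w ∈ W, m w)! :=
    mod_cast Nat.le_of_dvd (factorial_pos _) (prod_factorial_dvd_factorial_sum _ _)
  calc r ^ (∑ w ∈ W, m w) = ∏ w ∈ W, r ^ m w := (prod_pow_eq_pow_sum _ _ _).symm
    _ ≤ ∏ w ∈ W, ((a w).descFactorial (m w) : ℝ) :=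
        prod_le_prod (fun _ _ => by positivity) fun w hw => pow_le_descFactorial hr (h w hw)
    _ = (∏ w ∈ W, (m w)! : ℕ) * ∏ w ∈ W, ((a w).choose (m w) : ℝ) := by
        simp only [descFactorial_eq_factorial_mul_choose, cast_mul, cast_prod, prod_mul_distrib]
    _ ≤ (∑ w ∈ W, m w)! * ∏ w ∈ W, ((a w).choose (m w) : ℝ) := by gcongr

lemma card_filter_mem_mul_card_le {N : Type*} [Fintype N] [DecidableEq N]
    {𝒬 : Finset (Finset N)} {k : ℕ} (h𝒬 : ∀ P ∈ 𝒬, #P = k) (i : N) :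
    #{P ∈ 𝒬 | i ∈ P} * Fintype.card N ≤ k * (Fintype.card N).choose k := by
  obtain ⟨n, hn⟩ := Nat.exists_eq_add_one_of_ne_zero (Fintype.card_pos_iff.2 ⟨i⟩).ne'
  rcases k with _ | k
  · have : {P ∈ 𝒬 | i ∈ P} = ∅ :=
      filter_eq_empty_iff.2 fun P hP => by simp [card_eq_zero.1 (h𝒬 P hP)]
    simp [this]
  · have hsub : {P ∈ 𝒬 | i ∈ P} ⊆ {P ∈ (univ : Finset N).powersetCard (k + 1) | {i} ⊆ P} :=
      fun P hP => by
        simp only [mem_filter] at hP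
        simp [mem_powersetCard, h𝒬 P hP.1, hP.2]
    have hcount := card_le_card hsub
    rw [card_filter_powersetCard_subset _ _ _ (subset_univ _) (by simp)] at hcount
    simp only [Finset.card_univ, hn, card_singleton, add_tsub_cancel_right] at hcount
    rw [hn]
    calc #{P ∈ 𝒬 | i ∈ P} * (n + 1) ≤ n.choose k * (n + 1) := by gcongr
      _ = (k + 1) * (n + 1).choose (k + 1) := by rw [mul_comm, add_one_mul_choose_eq, mul_comm]

end Counting

section Fibers

variable {N β : Type*} (g : N → β)

lemma card_filter_comp_eq_sum_card_fiber {W : Finset β} {P : Finset N}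
    (hP : ∀ t ∈ P, g t ∈ W) (p : β → Prop) :
    #{t ∈ P | p (g t)} = ∑ w ∈ W with p w, #{t ∈ P | g t = w} := by
  rw [card_eq_sum_card_fiberwise (f := g) (t := {w ∈ W | p w}) fun t ht => by
    simp only [coe_filter, Set.mem_ofPred_eq] at ht ⊢
    exact ⟨hP t ht.1, ht.2⟩]
  refine sum_congr rfl fun w hw => congrArg card ?_
  ext t
  simp only [mem_filter] at hw ⊢
  constructor
  · exact fun ⟨⟨htP, _⟩, hgt⟩ => ⟨htP, hgt⟩
  · exact fun ⟨htP, hgt⟩ => ⟨⟨htP, hgt ▸ hw.2⟩, hgt⟩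

lemma card_filter_comp_eq_of_card_fiber_eq {W : Finset β} {P Q : Finset N}
    (hP : ∀ t ∈ P, g t ∈ W) (hQ : ∀ t ∈ Q, g t ∈ W)
    (h : ∀ w ∈ W, #{t ∈ P | g t = w} = #{t ∈ Q | g t = w}) (p : β → Prop) :
    #{t ∈ P | p (g t)} = #{t ∈ Q | p (g t)} := by
  rw [card_filter_comp_eq_sum_card_fiber g hP, card_filter_comp_eq_sum_card_fiber g hQ]
  exact sum_congr rfl fun w hw => h w (mem_filter.1 hw).1

lemma prod_choose_le_card_of_card_fiber [DecidableEq N] (S : Finset N) (W : Finset β)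
    (m : β → ℕ) {𝒬 : Finset (Finset N)}
    (h𝒬 : ∀ P ⊆ S, (∀ t ∈ P, g t ∈ W) → (∀ w ∈ W, #{t ∈ P | g t = w} = m w) → P ∈ 𝒬) :
    ∏ w ∈ W, (#{t ∈ S | g t = w}).choose (m w) ≤ #𝒬 := by
  set pools := W.pi fun w => {t ∈ S | g t = w}.powersetCard (m w)
  let union : (∀ w ∈ W, Finset N) → Finset N := fun T => W.attach.biUnion fun w => T w.1 w.2
  have mem_union {T t} : t ∈ union T ↔ ∃ w, ∃ hw : w ∈ W, t ∈ T w hw := by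
    simp [union]
  have hT_sub {T} (hT : T ∈ pools) {w} (hw : w ∈ W) : T w hw ⊆ {t ∈ S | g t = w} :=
    (mem_powersetCard.1 (mem_pi.1 hT w hw)).1
  have fiber_union {T} (hT : T ∈ pools) {w} (hw : w ∈ W) :
      {t ∈ union T | g t = w} = T w hw := by
    ext t
    simp only [mem_filter, mem_union]
    constructor
    · rintro ⟨⟨w', hw', ht⟩, rfl⟩
      obtain rfl := (mem_filter.1 (hT_sub hT hw' ht)).2
      exact ht
    · exact fun ht => ⟨⟨w, hw, ht⟩, (mem_filter.1 (hT_sub hT hw ht)).2⟩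
  calc ∏ w ∈ W, (#{t ∈ S | g t = w}).choose (m w) = #pools := by simp [pools, Finset.card_pi]
    _ ≤ #𝒬 := card_le_card_of_injOn union (fun T hT => h𝒬 _ ?_ ?_ ?_) fun T hT T' hT' h =>
        funext₂ fun w hw => by rw [← fiber_union hT hw, ← fiber_union hT' hw, h]
  · intro t ht
    obtain ⟨w, hw, ht⟩ := mem_union.1 ht
    exact (mem_filter.1 (hT_sub hT hw ht)).1
  · intro t ht
    obtain ⟨w, hw, ht⟩ := mem_union.1 ht
    exact (mem_filter.1 (hT_sub hT hw ht)).2 ▸ hw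
  · intro w hw
    rw [fiber_union hT hw]
    exact (mem_powersetCard.1 (mem_pi.1 hT w hw)).2

end Fibers

lemma card_filter_le_card_filter_add_card_inter {N : Type*} [DecidableEq N] {p q : N → Prop}
    {C : Finset N} (h : ∀ t ∉ C, p t → q t) (P : Finset N) :
    #{t ∈ P | p t} ≤ #{t ∈ P | q t} + #(C ∩ P) := by
  refine (card_le_card fun t ht => ?_).trans (card_union_le _ _)
  simp only [mem_filter, mem_union, mem_inter] at ht ⊢
  by_cases htC : t ∈ C
  · exact Or.inr ⟨htC, ht.1⟩
  · exact Or.inl ⟨ht.1, h t htC ht.2⟩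

section SelectionProbability

variable {N : Type*} [DecidableEq N]

noncomputable def selectionProb (𝒬 : Finset (Finset N)) (i : N) : ℝ :=
  ((𝒬.filter fun P => i ∈ P).card : ℝ) / 𝒬.card

lemma sum_selectionProb (𝒬 : Finset (Finset N)) (S : Finset N) :
    ∑ i ∈ S, selectionProb 𝒬 i = (∑ P ∈ 𝒬, #(S ∩ P) : ℕ) / #𝒬 := by
  simp only [selectionProb, ← sum_div, ← Nat.cast_sum, ← filter_mem_eq_inter, card_filter]
  rw [sum_comm]

lemma le_sum_selectionProb {𝒬 : Finset (Finset N)} (h𝒬 : 𝒬.Nonempty) {S : Finset N} {a : ℕ}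
    (h : ∀ P ∈ 𝒬, a ≤ #(S ∩ P)) : (a : ℝ) ≤ ∑ i ∈ S, selectionProb 𝒬 i := by
  rw [sum_selectionProb, le_div_iff₀ (by exact_mod_cast h𝒬.card_pos)]
  have := card_nsmul_le_sum 𝒬 _ a h
  rw [smul_eq_mul, mul_comm] at this
  exact_mod_cast this

lemma sum_selectionProb_le_add {𝒬 : Finset (Finset N)} {S T : Finset N} {b : ℕ}
    (h : ∀ P ∈ 𝒬, #(S ∩ P) ≤ b + #(T ∩ P)) :
    ∑ i ∈ S, selectionProb 𝒬 i ≤ b + ∑ i ∈ T, selectionProb 𝒬 i := by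
  rcases 𝒬.eq_empty_or_nonempty with rfl | h𝒬
  · simp [selectionProb]
  have hcard : (0 : ℝ) < #𝒬 := by exact_mod_cast h𝒬.card_pos
  rw [sum_selectionProb, sum_selectionProb, div_le_iff₀ hcard, add_mul,
    div_mul_cancel₀ _ hcard.ne']
  have := sum_le_sum h
  rw [sum_add_distrib, sum_const, smul_eq_mul] at this
  exact_mod_cast this.trans_eq (by ring)

lemma selectionProb_le_of_pow_le [Fintype N] {𝒬 : Finset (Finset N)} {k : ℕ}
    (h𝒬 : ∀ P ∈ 𝒬, #P = k) {ρ : ℝ} (hρ : 0 < ρ)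
    (hlarge : (ρ * Fintype.card N) ^ k ≤ k ! * #𝒬) (i : N) :
    selectionProb 𝒬 i ≤ k / (ρ ^ k * Fintype.card N) := by
  have hcount := card_filter_mem_mul_card_le h𝒬 i
  have hn := Fintype.card_pos_iff.2 ⟨i⟩
  generalize Fintype.card N = n at hcount hn hlarge ⊢
  have h𝒬pos : (0 : ℝ) < #𝒬 :=
    pos_of_mul_pos_right ((by positivity : (0 : ℝ) < (ρ * n) ^ k).trans_le hlarge) (by positivity)
  have hchoose : (n.choose k : ℝ) * k ! ≤ n ^ k :=
    (le_div_iff₀ (by positivity)).1 (choose_le_pow_div k n)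
  rw [selectionProb, div_le_div_iff₀ h𝒬pos (by positivity)]
  refine le_of_mul_le_mul_right ?_ (pow_pos (cast_pos.2 hn) k)
  calc (#{P ∈ 𝒬 | i ∈ P} : ℝ) * (ρ ^ k * n) * n ^ k
      = (#{P ∈ 𝒬 | i ∈ P} * n) * (ρ * n) ^ k := by ring
    _ ≤ (k * n.choose k) * (k ! * #𝒬) :=
        mul_le_mul (mod_cast hcount) hlarge (by positivity) (by positivity)
    _ = k * (n.choose k * k !) * #𝒬 := by ring
    _ ≤ k * n ^ k * #𝒬 := by gcongr
    _ = k * #𝒬 * n ^ k := by ring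

end SelectionProbability

section QuotaPanels

variable {N : Type*} [Fintype N] {F : Type*} {V : F → Type*}

noncomputable def quotaPanels (feat : N → ∀ f : F, V f) (k : ℕ) (ℓ u : ((f : F) × V f) → ℕ) :
    Finset (Finset N) :=
  Finset.univ.filter fun P : Finset N =>
    P.card = k ∧ ∀ (f : F) (v : V f),
      ℓ ⟨f, v⟩ ≤ (P.filter fun t => feat t f = v).card ∧
      (P.filter fun t => feat t f = v).card ≤ u ⟨f, v⟩

variable {feat feat' : N → ∀ f : F, V f} {k : ℕ} {ℓ u : ((f : F) × V f) → ℕ}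

lemma card_of_mem_quotaPanels {P : Finset N} (hP : P ∈ quotaPanels feat k ℓ u) : #P = k :=
  (mem_filter.1 hP).2.1

lemma quota_of_mem_quotaPanels {P : Finset N} (hP : P ∈ quotaPanels feat k ℓ u) (f : F)
    (v : V f) : ℓ ⟨f, v⟩ ≤ #{t ∈ P | feat t f = v} ∧ #{t ∈ P | feat t f = v} ≤ u ⟨f, v⟩ :=
  (mem_filter.1 hP).2.2 f v

lemma mem_quotaPanels_of_card_fiber_eq {P₀ P : Finset N} (hP₀ : P₀ ∈ quotaPanels feat k ℓ u)
    (hPW : ∀ t ∈ P, feat t ∈ P₀.image feat)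
    (hfiber : ∀ w ∈ P₀.image feat, #{t ∈ P | feat t = w} = #{t ∈ P₀ | feat t = w})
    (hagree : ∀ t ∈ P, feat' t = feat t) : P ∈ quotaPanels feat' k ℓ u := by
  have hcount (p : (∀ f : F, V f) → Prop) : #{t ∈ P | p (feat t)} = #{t ∈ P₀ | p (feat t)} :=
    card_filter_comp_eq_of_card_fiber_eq feat hPW (fun t ht => mem_image_of_mem feat ht) hfiber p
  refine mem_filter.2 ⟨mem_univ P, ?_, fun f v => ?_⟩
  · simpa [card_of_mem_quotaPanels hP₀] using hcount fun _ => True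
  · rw [filter_congr fun t ht => by rw [hagree t ht], hcount fun w => w f = v]
    exact quota_of_mem_quotaPanels hP₀ f v

lemma pow_le_factorial_mul_card_quotaPanels [DecidableEq N] {C : Finset N}
    (hfeat' : ∀ i ∉ C, feat' i = feat i) {P₀ : Finset N} (hP₀ : P₀ ∈ quotaPanels feat k ℓ u)
    {r : ℝ} (hr : 0 ≤ r) (hpool : ∀ t ∈ P₀, r + k + #C ≤ #{i | feat i = feat t}) :
    r ^ k ≤ k ! * #(quotaPanels feat' k ℓ u) := by
  set m : (∀ f : F, V f) → ℕ := fun w => #{t ∈ P₀ | feat t = w}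
  have hk : ∑ w ∈ P₀.image feat, m w = k :=
    (card_eq_sum_card_fiberwise fun t ht => mem_image_of_mem feat ht).symm.trans
      (card_of_mem_quotaPanels hP₀)
  have hprod := prod_choose_le_card_of_card_fiber feat Cᶜ (P₀.image feat) m
    (𝒬 := quotaPanels feat' k ℓ u) fun P hPC hPW hPm =>
      mem_quotaPanels_of_card_fiber_eq hP₀ hPW hPm fun t ht => hfeat' t (by simpa using hPC ht)
  calc r ^ k = r ^ (∑ w ∈ P₀.image feat, m w) := by rw [hk]
    _ ≤ (∑ w ∈ P₀.image feat, m w)! *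
          ∏ w ∈ P₀.image feat, ((#{i ∈ Cᶜ | feat i = w}).choose (m w) : ℝ) :=
        pow_le_factorial_mul_prod_choose _ m _ hr fun w hw => ?_
    _ ≤ k ! * #(quotaPanels feat' k ℓ u) := by rw [hk]; gcongr; exact_mod_cast hprod
  obtain ⟨t, ht, rfl⟩ := mem_image.1 hw
  have hmk : (m (feat t) : ℝ) ≤ k :=
    mod_cast hk ▸ single_le_sum (fun _ _ => Nat.zero_le _) hw
  have hhonest : (#{i | feat i = feat t} : ℝ) ≤ #{i ∈ Cᶜ | feat i = feat t} + #C :=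
    mod_cast card_le_card_sdiff_add_card.trans_eq (by congr 2; ext; simp [and_comm])
  linarith [hpool t ht]

end QuotaPanels

theorem composition_manipulability_bound_general
    {N : Type*} [Fintype N] [DecidableEq N]
    {F : Type*} {V : F → Type*}
    (feat : N → ∀ f : F, V f) (k : ℕ)
    (ℓ u : ((f : F) × V f) → ℕ)
    (Pan : Finset (Finset N))
    (hPan : Pan = Finset.univ.filter fun P : Finset N =>
      P.card = k ∧ ∀ (f : F) (v : V f),
        ℓ ⟨f, v⟩ ≤ (P.filter fun t => feat t f = v).card ∧
        (P.filter fun t => feat t f = v).card ≤ u ⟨f, v⟩)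
    (κ κ' : ℝ) (hκ' : κ' < κ)
    (hrich : IsRich feat Pan k κ) :
    ∀ (feat' : N → ∀ f : F, V f) (C : Finset N),
      (C.card : ℝ) ≤ κ' * Fintype.card N →
      (∀ i ∉ C, feat' i = feat i) →
      ∀ Pant : Finset (Finset N),
        Pant = (Finset.univ.filter fun P : Finset N =>
          P.card = k ∧ ∀ (f : F) (v : V f),
            ℓ ⟨f, v⟩ ≤ (P.filter fun t => feat' t f = v).card ∧
            (P.filter fun t => feat' t f = v).card ≤ u ⟨f, v⟩) →
        ∀ (f0 : F) (v0 : V f0),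
          ∑ i ∈ Finset.univ.filter (fun i => feat i f0 = v0),
              (((Pant.filter fun P => i ∈ P).card : ℝ) / Pant.card -
                ((Pan.filter fun P => i ∈ P).card : ℝ) / Pan.card) ≤
            ((u ⟨f0, v0⟩ : ℝ) - (ℓ ⟨f0, v0⟩ : ℝ)) +
              C.card * k / ((κ - κ') ^ k * Fintype.card N) := by
  rintro feat' C hC hfeat' Pant rfl f0 v0
  subst hPan
  obtain ⟨W, -, hW, P₀, hP₀, hP₀W⟩ := hrich
  set Pan := quotaPanels feat k ℓ u
  set Pant := quotaPanels feat' k ℓ u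
  set G : Finset N := {i | feat i f0 = v0}
  have hρ : 0 < κ - κ' := sub_pos.2 hκ'
  have hlarge : ((κ - κ') * Fintype.card N) ^ k ≤ k ! * #Pant :=
    pow_le_factorial_mul_card_quotaPanels hfeat' hP₀ (by positivity) fun t ht => by
      linarith [hW _ (hP₀W t ht)]
  have hcoalition :
      ∑ i ∈ C, selectionProb Pant i ≤ #C * (k / ((κ - κ') ^ k * Fintype.card N)) := by
    simpa using sum_le_card_nsmul C _ _ fun i _ =>
      selectionProb_le_of_pow_le (fun P => card_of_mem_quotaPanels) hρ hlarge i
  have hgain : ∑ i ∈ G, selectionProb Pant i ≤ u ⟨f0, v0⟩ + ∑ i ∈ C, selectionProb Pant i :=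
    sum_selectionProb_le_add fun P hP => by
      rw [filter_inter, univ_inter]
      refine (card_filter_le_card_filter_add_card_inter (p := fun t => feat t f0 = v0)
        (q := fun t => feat' t f0 = v0) (fun t ht hp => by rwa [hfeat' t ht]) P).trans ?_
      gcongr
      exact (quota_of_mem_quotaPanels hP f0 v0).2
  have hloss : (ℓ ⟨f0, v0⟩ : ℝ) ≤ ∑ i ∈ G, selectionProb Pan i :=
    le_sum_selectionProb ⟨P₀, hP₀⟩ fun P hP => by
      rw [filter_inter, univ_inter]
      exact (quota_of_mem_quotaPanels hP f0 v0).1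
  calc ∑ i ∈ G, (selectionProb Pant i - selectionProb Pan i)
      = ∑ i ∈ G, selectionProb Pant i - ∑ i ∈ G, selectionProb Pan i := sum_sub_distrib ..
    _ ≤ (u ⟨f0, v0⟩ - ℓ ⟨f0, v0⟩) + #C * k / ((κ - κ') ^ k * Fintype.card N) := by
      rw [mul_div_assoc]; linarith

/-- Composition manipulability of uniform (MaxEntropy) panel selection: in a
`κ`-rich instance with `n` pool members and panel size `k ≥ 1`, for every coalition `C` of size
`c ≤ κ'·n` (with `0 ≤ κ' < κ`), every joint misreport `feat'` (agreeing with `feat` off `C`),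
and every feature-value pair `(f0, v0)`, the expected number of seats gained by the group
`{i : feat i f0 = v0}` (true feature values) under the uniform distributions over the
manipulated and true panel sets is at most `(u_{f0,v0} − ℓ_{f0,v0}) + c·k/((κ−κ')^k · n)`. -/
theorem composition_manipulability_bound
    {N : Type*} [Fintype N] [DecidableEq N]
    {F : Type*} {V : F → Type*}
    (feat : N → ∀ f : F, V f) (k : ℕ) (hk : 1 ≤ k)
    (ℓ u : ((f : F) × V f) → ℕ) (hℓu : ∀ fv, ℓ fv ≤ u fv) (huk : ∀ fv, u fv ≤ k)
    (Pan : Finset (Finset N))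
    (hPan : Pan = Finset.univ.filter fun P : Finset N =>
      P.card = k ∧ ∀ (f : F) (v : V f),
        ℓ ⟨f, v⟩ ≤ (P.filter fun t => feat t f = v).card ∧
        (P.filter fun t => feat t f = v).card ≤ u ⟨f, v⟩)
    (κ κ' : ℝ) (hκ : 0 < κ) (hκ'0 : 0 ≤ κ') (hκ' : κ' < κ)
    (hrich : IsRich feat Pan k κ) :
    ∀ (feat' : N → ∀ f : F, V f) (C : Finset N),
      (C.card : ℝ) ≤ κ' * Fintype.card N →
      (∀ i ∉ C, feat' i = feat i) →
      ∀ Pant : Finset (Finset N),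
        Pant = (Finset.univ.filter fun P : Finset N =>
          P.card = k ∧ ∀ (f : F) (v : V f),
            ℓ ⟨f, v⟩ ≤ (P.filter fun t => feat' t f = v).card ∧
            (P.filter fun t => feat' t f = v).card ≤ u ⟨f, v⟩) →
        ∀ (f0 : F) (v0 : V f0),
          ∑ i ∈ Finset.univ.filter (fun i => feat i f0 = v0),
              (((Pant.filter fun P => i ∈ P).card : ℝ) / Pant.card -
                ((Pan.filter fun P => i ∈ P).card : ℝ) / Pan.card) ≤
            ((u ⟨f0, v0⟩ : ℝ) - (ℓ ⟨f0, v0⟩ : ℝ)) +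
              C.card * k / ((κ - κ') ^ k * Fintype.card N) :=
  composition_manipulability_bound_general feat k ℓ u Pan hPan κ κ' hκ' hrich
end

section
/- Fix θ ∈ ℝ^N and define the exponential-family panel distribution λ_θ(P) = exp(Σ_{i∈P} θ(i)) / Σ_{Q∈𝒫} exp(Σ_{i∈Q} θ(i)) for P ∈ 𝒫. Then λ_θ is the unique maximizer of Shannon entropy among all distributions with the same selection probabilities: for every λ ∈ Δ(𝒫) with π_λ = π_{λ_θ}, we have H(λ) ≤ H(λ_θ), with equality if and only if λ = λ_θ. -/
open scoped Classical

/-- The exponential-family panel distribution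
`λ_θ(P) = exp(∑_{i∈P} θ i) / ∑_{Q∈Pan} exp(∑_{i∈Q} θ i)` is the unique maximizer of Shannon
entropy among all panel distributions with the same selection probabilities: for every
distribution `q` on the panel set with `π_q = π_{λ_θ}`, `H(q) ≤ H(λ_θ)`, with equality if and
only if `q = λ_θ`. -/
theorem expfamily_max_entropy
    {N : Type*} [Fintype N] [DecidableEq N]
    {F : Type*} {V : F → Type*}
    (feat : N → ∀ f : F, V f) (k : ℕ) (ℓ u : ((f : F) × V f) → ℕ)
    (Pan : Finset (Finset N))
    (hPan : Pan = Finset.univ.filter fun P : Finset N =>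
      P.card = k ∧ ∀ (f : F) (v : V f),
        ℓ ⟨f, v⟩ ≤ (P.filter fun t => feat t f = v).card ∧
        (P.filter fun t => feat t f = v).card ≤ u ⟨f, v⟩)
    (hne : Pan.Nonempty)
    (θ : N → ℝ) (lamθ : Finset N → ℝ)
    (hlamθ : ∀ P, lamθ P = if P ∈ Pan then
      Real.exp (∑ i ∈ P, θ i) / ∑ Q ∈ Pan, Real.exp (∑ i ∈ Q, θ i) else 0)
    (q : Finset N → ℝ)
    (hq0 : ∀ P, 0 ≤ q P) (hqsupp : ∀ P ∉ Pan, q P = 0) (hq1 : ∑ P ∈ Pan, q P = 1)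
    (hmarg : ∀ i : N, ∑ P ∈ Pan.filter (fun P => i ∈ P), q P =
      ∑ P ∈ Pan.filter (fun P => i ∈ P), lamθ P) :
    (-∑ P ∈ Pan, q P * Real.log (q P)) ≤ (-∑ P ∈ Pan, lamθ P * Real.log (lamθ P)) ∧
    ((-∑ P ∈ Pan, q P * Real.log (q P)) = (-∑ P ∈ Pan, lamθ P * Real.log (lamθ P)) ↔
      q = lamθ) := by
  clear hPan
  set Z : ℝ := ∑ Q ∈ Pan, Real.exp (∑ i ∈ Q, θ i) with hZdef
  have hZ : 0 < Z := Finset.sum_pos (fun _ _ => Real.exp_pos _) hne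
  have hp_pos : ∀ P ∈ Pan, 0 < lamθ P := by
    intro P hP
    rw [hlamθ P, if_pos hP]
    exact div_pos (Real.exp_pos _) hZ
  have hp_log : ∀ P ∈ Pan, Real.log (lamθ P) = (∑ i ∈ P, θ i) - Real.log Z := by
    intro P hP
    rw [hlamθ P, if_pos hP, Real.log_div (Real.exp_ne_zero _) (ne_of_gt hZ),
      Real.log_exp]
  have hsum_lam : ∑ P ∈ Pan, lamθ P = 1 := by
    have : ∑ P ∈ Pan, lamθ P = (∑ P ∈ Pan, Real.exp (∑ i ∈ P, θ i)) / Z := by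
      rw [Finset.sum_div]
      exact Finset.sum_congr rfl fun P hP => by rw [hlamθ P, if_pos hP]
    rw [this, ← hZdef, div_self (ne_of_gt hZ)]
  -- swap lemma
  have hswap : ∀ w : Finset N → ℝ,
      ∑ P ∈ Pan, w P * ∑ i ∈ P, θ i =
      ∑ i : N, θ i * ∑ P ∈ Pan.filter (fun P => i ∈ P), w P := by
    intro w
    have h1 : ∀ P ∈ Pan, w P * ∑ i ∈ P, θ i =
        ∑ i : N, (if i ∈ P then w P * θ i else 0) := by
      intro P _
      rw [Finset.sum_ite_mem, Finset.univ_inter, Finset.mul_sum]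
    rw [Finset.sum_congr rfl h1, Finset.sum_comm]
    refine Finset.sum_congr rfl fun i _ => ?_
    rw [Finset.mul_sum, Finset.sum_filter]
    exact Finset.sum_congr rfl fun P _ => by split <;> simp [mul_comm]
  -- cross identity
  have hcross : ∑ P ∈ Pan, q P * Real.log (lamθ P) =
      ∑ P ∈ Pan, lamθ P * Real.log (lamθ P) := by
    have key : ∀ w : Finset N → ℝ, (∀ P ∈ Pan, True) →
        ∑ P ∈ Pan, w P * Real.log (lamθ P) =
        (∑ i : N, θ i * ∑ P ∈ Pan.filter (fun P => i ∈ P), w P) -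
          Real.log Z * ∑ P ∈ Pan, w P := by
      intro w _
      have : ∀ P ∈ Pan, w P * Real.log (lamθ P) =
          w P * ∑ i ∈ P, θ i - Real.log Z * w P := by
        intro P hP; rw [hp_log P hP]; ring
      rw [Finset.sum_congr rfl this, Finset.sum_sub_distrib, hswap w,
        Finset.mul_sum]
    rw [key q (fun _ _ => trivial), key lamθ (fun _ _ => trivial), hq1, hsum_lam]
    congr 1
    exact Finset.sum_congr rfl fun i _ => by rw [hmarg i]
  -- Gibbs inequality, termwise
  have hterm : ∀ P ∈ Pan,
      q P * Real.log (lamθ P) - q P * Real.log (q P) ≤ lamθ P - q P := by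
    intro P hP
    rcases eq_or_lt_of_le (hq0 P) with h0 | h0
    · rw [← h0]; simp; exact le_of_lt (hp_pos P hP)
    · have hx : 0 < lamθ P / q P := div_pos (hp_pos P hP) h0
      have hlog := Real.log_le_sub_one_of_pos hx
      have : Real.log (lamθ P) - Real.log (q P) = Real.log (lamθ P / q P) :=
        (Real.log_div (ne_of_gt (hp_pos P hP)) (ne_of_gt h0)).symm
      calc q P * Real.log (lamθ P) - q P * Real.log (q P)
          = q P * Real.log (lamθ P / q P) := by rw [← this]; ring
        _ ≤ q P * (lamθ P / q P - 1) := by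
            exact mul_le_mul_of_nonneg_left hlog (le_of_lt h0)
        _ = lamθ P - q P := by field_simp
  have hsum_rhs : ∑ P ∈ Pan, (lamθ P - q P) = 0 := by
    rw [Finset.sum_sub_distrib, hsum_lam, hq1, sub_self]
  have hgibbs : ∑ P ∈ Pan, (q P * Real.log (lamθ P) - q P * Real.log (q P)) ≤ 0 := by
    rw [← hsum_rhs]; exact Finset.sum_le_sum hterm
  have hineq : (-∑ P ∈ Pan, q P * Real.log (q P)) ≤
      (-∑ P ∈ Pan, lamθ P * Real.log (lamθ P)) := by
    rw [← hcross]
    have := hgibbs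
    rw [Finset.sum_sub_distrib] at this
    linarith
  refine ⟨hineq, ?_, fun h => by rw [h]⟩
  intro heq
  -- equality case
  have heq2 : ∑ P ∈ Pan, (q P * Real.log (lamθ P) - q P * Real.log (q P)) =
      ∑ P ∈ Pan, (lamθ P - q P) := by
    rw [Finset.sum_sub_distrib, hcross, hsum_rhs]
    linarith
  have hall := (Finset.sum_eq_sum_iff_of_le hterm).mp heq2
  funext P
  by_cases hP : P ∈ Pan
  · have hPeq := hall P hP
    rcases eq_or_lt_of_le (hq0 P) with h0 | h0
    · exfalso
      rw [← h0] at hPeq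
      simp at hPeq
      exact absurd hPeq.symm (ne_of_gt (hp_pos P hP))
    · by_contra hne'
      have hx : 0 < lamθ P / q P := div_pos (hp_pos P hP) h0
      have hx1 : lamθ P / q P ≠ 1 := by
        intro h1
        exact hne' ((div_eq_one_iff_eq (ne_of_gt h0)).mp h1).symm
      have hstrict := Real.log_lt_sub_one_of_pos hx hx1
      have hlogdiv : Real.log (lamθ P) - Real.log (q P) = Real.log (lamθ P / q P) :=
        (Real.log_div (ne_of_gt (hp_pos P hP)) (ne_of_gt h0)).symm
      have : q P * Real.log (lamθ P) - q P * Real.log (q P) < lamθ P - q P := by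
        calc q P * Real.log (lamθ P) - q P * Real.log (q P)
            = q P * Real.log (lamθ P / q P) := by rw [← hlogdiv]; ring
          _ < q P * (lamθ P / q P - 1) := by
              exact (mul_lt_mul_iff_right₀ h0).mpr hstrict
          _ = lamθ P - q P := by field_simp
      linarith [hPeq]
  · rw [hqsupp P hP, hlamθ P, if_neg hP]
end
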